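/- arXiv:2103.14351 — 10 statements merged into one kernel-verified Lean document; each statement's English description precedes it below -/
import Mathlib

section
/- For every r ∈ [0,1], the map g^{(r)} : Δ → ℝ^d defined by g^{(r)}(p) = p + (1/2) f^{(r)}(p) is continuous, maps Δ into Δ (in particular Σ_i f^{(r)}_i(p) = 0 and g^{(r)}_i(p) ≥ 0 for all p ∈ Δ and all i), and has a fixed point in Δ; equivalently, f^{(r)} has a zero in Δ. -/
/-!
For `r = 0` a vertex of the simplex is a zero of `f`, the diagonal of a skew matrix being zero.
For `r > 0`, with `a = 2(1 - r)` and `b = r / d`, a zero is a point `q > 0` with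
`a (M̃q)ᵢ + b / qᵢ = r` for all `i`: the first-order condition for `q` to be a best reply to
itself in the symmetric zero-sum game with payoff
`u(x, y) = a xᵀM̃y + b ∑ log xᵢ - b ∑ log yᵢ`. On the truncated simplex `{x ∈ Δ | xᵢ ≥ ε}` this
payoff is continuous, concave in `x` and antisymmetric, so Sion's minimax theorem yields a
symmetric equilibrium `q`. For small `ε` the log barrier keeps `q` off the walls `xᵢ = ε`, so the
marginal payoffs `a (M̃q)ᵢ + b / qᵢ` are all equal; since `qᵀM̃q = 0`, their common value is
`b d = r`.
-/

open Finset

/-- The L¹ distance on `ℝ^d`. -/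
noncomputable def l1dist {m : ℕ} (x y : Fin m → ℝ) : ℝ := ∑ i, |x i - y i|

/-- The unit simplex in `ℝ^d`. -/
def unitSimplex (d : ℕ) : Set (Fin d → ℝ) := {x | (∀ i, 0 ≤ x i) ∧ ∑ i, x i = 1}

/-- The vector field `f^{(r)}` with `f^{(r)}_i(p) = 2(1−r) p_i (M̃p)_i + r(1/d − p_i)`. -/
noncomputable def fvec (d : ℕ) (Mt : Matrix (Fin d) (Fin d) ℝ) (r : ℝ) :
    (Fin d → ℝ) → Fin d → ℝ :=
  fun p i => 2 * (1 - r) * p i * Mt.mulVec p i + r * (1 / (d : ℝ) - p i)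

open Matrix Real

section SkewMatrix
variable {n : Type*} [Fintype n] {M : Matrix n n ℝ}

theorem dotProduct_mulVec_comm_of_skew (hM : ∀ i j, M j i = -M i j) (x y : n → ℝ) :
    y ⬝ᵥ M *ᵥ x = -(x ⬝ᵥ M *ᵥ y) := by
  have hT : Mᵀ = -M := by ext i j; exact hM i j
  rw [dotProduct_mulVec, ← mulVec_transpose, hT, dotProduct_comm, neg_mulVec, dotProduct_neg]

theorem dotProduct_mulVec_self_of_skew (hM : ∀ i j, M j i = -M i j) (x : n → ℝ) :
    x ⬝ᵥ M *ᵥ x = 0 := by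
  linarith [dotProduct_mulVec_comm_of_skew hM x x]

theorem abs_mulVec_le_one (hM : ∀ i j, |M i j| ≤ 1) {x : n → ℝ} (hx : x ∈ stdSimplex ℝ n)
    (i : n) : |(M *ᵥ x) i| ≤ 1 :=
  calc |(M *ᵥ x) i| ≤ ∑ j, |M i j * x j| := abs_sum_le_sum_abs _ _
    _ ≤ ∑ j, x j := sum_le_sum fun j _ => by
        rw [abs_mul, abs_of_nonneg (hx.1 j)]
        exact mul_le_of_le_one_left (hx.1 j) (hM i j)
    _ = 1 := hx.2

end SkewMatrix

theorem exists_forall_le_zero_of_skew {E : Type*} [TopologicalSpace E] [AddCommGroup E]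
    [Module ℝ E] [IsTopologicalAddGroup E] [ContinuousSMul ℝ E] {S : Set E} (hne : S.Nonempty)
    (hS : Convex ℝ S) (hSc : IsCompact S) {F : E → E → ℝ}
    (hF : ∀ x ∈ S, ∀ y ∈ S, F y x = -F x y) (hcont : ∀ y ∈ S, ContinuousOn (F · y) S)
    (hconc : ∀ y ∈ S, ConcaveOn ℝ S (F · y)) :
    ∃ q ∈ S, ∀ x ∈ S, F x q ≤ 0 := by
  have hswap : ∀ y ∈ S, Set.EqOn (F y ·) (fun x => -F x y) S := fun y hy x hx => hF x hx y hy
  obtain ⟨q, hq, p, hp, hsaddle⟩ := Sion.exists_isSaddlePointOn (f := fun x y => F y x) hne hS hSc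
    (fun y hy => ((hcont y hy).neg.congr (hswap y hy)).lowerSemicontinuousOn)
    (fun y hy => ((hconc y hy).neg.congr (hswap y hy).symm).quasiconvexOn)
    hS hne hSc (fun x hx => (hcont x hx).upperSemicontinuousOn)
    (fun x hx => (hconc x hx).quasiconcaveOn)
  have hpp : F p p = 0 := by linarith [hF p hp p hp]
  exact ⟨q, hq, fun x hx => hpp ▸ hsaddle p hp x hx⟩

section LogBarrier
variable {n : Type*} [Fintype n] {M : Matrix n n ℝ} {a b : ℝ}

noncomputable def logBarrierPayoff (M : Matrix n n ℝ) (a b : ℝ) (x y : n → ℝ) : ℝ :=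
  a * (x ⬝ᵥ M *ᵥ y) + b * ∑ i, log (x i) - b * ∑ i, log (y i)

theorem concaveOn_sum_log : ConcaveOn ℝ (Set.univ.pi fun _ : n => Set.Ioi 0)
    fun x => ∑ i, log (x i) := by
  refine ⟨convex_pi fun _ _ => convex_Ioi 0, fun x hx y hy s t hs ht hst => ?_⟩
  simp only [smul_eq_mul, Pi.add_apply, Pi.smul_apply, mul_sum, ← sum_add_distrib]
  exact sum_le_sum fun i _ =>
    strictConcaveOn_log_Ioi.concaveOn.2 (hx i trivial) (hy i trivial) hs ht hst

theorem concaveOn_logBarrierPayoff (hb : 0 ≤ b) (y : n → ℝ) :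
    ConcaveOn ℝ (Set.univ.pi fun _ => Set.Ioi 0) (logBarrierPayoff M a b · y) := by
  refine ⟨concaveOn_sum_log.1, fun x hx z hz s t hs ht hst => ?_⟩
  have hlog := mul_le_mul_of_nonneg_left (concaveOn_sum_log.2 hx hz hs ht hst) hb
  simp only [logBarrierPayoff, add_dotProduct, smul_dotProduct, smul_eq_mul] at hlog ⊢
  linear_combination hlog - b * (∑ i, log (y i)) * hst

theorem continuousOn_logBarrierPayoff (y : n → ℝ) :
    ContinuousOn (logBarrierPayoff M a b · y) (Set.univ.pi fun _ => Set.Ioi 0) := by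
  have hlog : ∀ i, ContinuousOn (fun x : n → ℝ => log (x i)) (Set.univ.pi fun _ => Set.Ioi 0) :=
    fun i => (continuous_apply i).continuousOn.log fun x hx => (hx i trivial).ne'
  exact ((continuous_const.mul (continuous_id.dotProduct continuous_const)).continuousOn.add
    (continuousOn_const.mul (continuousOn_finsetSum _ fun i _ => hlog i))).sub continuousOn_const

theorem hasFDerivAt_logBarrierPayoff {q : n → ℝ} (hq : ∀ i, 0 < q i) (y : n → ℝ) :
    HasFDerivAt (logBarrierPayoff M a b · y)
      (∑ i, (a * (M *ᵥ y) i + b / q i) • (ContinuousLinearMap.proj i : (n → ℝ) →L[ℝ] ℝ)) q := by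
  have hsum : (logBarrierPayoff M a b · y) =
      fun x => ∑ i, (a * (x i * (M *ᵥ y) i) + b * log (x i)) - b * ∑ i, log (y i) := by
    ext x
    simp only [logBarrierPayoff, dotProduct, sum_add_distrib, mul_sum]
  rw [hsum]
  refine (HasFDerivAt.fun_sum fun i _ => ?_).sub_const _
  convert (((hasFDerivAt_apply i q).mul_const ((M *ᵥ y) i)).const_mul a).add
    (((hasFDerivAt_apply i q).log (hq i).ne').const_mul b) using 1
  · ext; rfl
  · ext v
    simp only [_root_.smul_apply, _root_.add_apply, ContinuousLinearMap.proj_apply, smul_eq_mul]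
    ring

theorem logBarrierPayoff_swap (hM : ∀ i j, M j i = -M i j) (x y : n → ℝ) :
    logBarrierPayoff M a b y x = -logBarrierPayoff M a b x y := by
  simp only [logBarrierPayoff, dotProduct_mulVec_comm_of_skew hM x y]
  ring

theorem logBarrierPayoff_self (hM : ∀ i j, M j i = -M i j) (x : n → ℝ) :
    logBarrierPayoff M a b x x = 0 := by
  simp [logBarrierPayoff, dotProduct_mulVec_self_of_skew hM]

theorem sum_sub_mul_le_zero_of_isMaxOn {S : Set (n → ℝ)} (hS : Convex ℝ S) {q : n → ℝ}
    (hq : q ∈ S) (hqpos : ∀ i, 0 < q i) (hmax : IsMaxOn (logBarrierPayoff M a b · q) S q)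
    {y : n → ℝ} (hy : y ∈ S) : ∑ i, (y i - q i) * (a * (M *ᵥ q) i + b / q i) ≤ 0 := by
  have := hmax.localize.hasFDerivWithinAt_nonpos
    (hasFDerivAt_logBarrierPayoff hqpos q).hasFDerivWithinAt
    (sub_mem_posTangentConeAt_of_segment_subset (hS.segment_subset hq hy))
  simpa [mul_comm] using this

end LogBarrier

section TruncSimplex
variable {n : Type*} [Fintype n] {M : Matrix n n ℝ} {a b ε : ℝ}

def truncSimplex (n : Type*) [Fintype n] (ε : ℝ) : Set (n → ℝ) :=
  stdSimplex ℝ n ∩ Set.univ.pi fun _ => Set.Ici ε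

theorem convex_truncSimplex : Convex ℝ (truncSimplex n ε) :=
  (convex_stdSimplex ℝ n).inter (convex_pi fun _ _ => convex_Ici ε)

theorem isCompact_truncSimplex : IsCompact (truncSimplex n ε) :=
  (isCompact_stdSimplex ℝ n).inter_right (isClosed_set_pi fun _ _ => isClosed_Ici)

theorem truncSimplex_nonempty [Nonempty n] (hε : ε ≤ (Fintype.card n : ℝ)⁻¹) :
    (truncSimplex n ε).Nonempty :=
  ⟨fun _ => (Fintype.card n : ℝ)⁻¹, ⟨fun _ => by positivity, by simp⟩, fun _ _ => hε⟩

theorem truncSimplex_subset_pi_Ioi (hε : 0 < ε) :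
    truncSimplex n ε ⊆ Set.univ.pi fun _ => Set.Ioi 0 :=
  fun _ hx i _ => hε.trans_le (hx.2 i trivial)

theorem add_smul_single_sub_single_mem_truncSimplex [DecidableEq n] (hε : 0 ≤ ε) {q : n → ℝ}
    (hq : q ∈ truncSimplex n ε) {i j : n} (hij : i ≠ j) :
    q + (q j - ε) • (Pi.single i 1 - Pi.single j 1) ∈ truncSimplex n ε := by
  have hge : ∀ k, ε ≤ (q + (q j - ε) • (Pi.single i 1 - Pi.single j 1) : n → ℝ) k := by
    intro k
    have hk : ε ≤ q k := hq.2 k trivial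
    have hj : ε ≤ q j := hq.2 j trivial
    rcases eq_or_ne k i with rfl | hki
    · simp only [Pi.add_apply, Pi.smul_apply, Pi.sub_apply, Pi.single_eq_same,
        Pi.single_eq_of_ne hij, smul_eq_mul]
      linarith
    rcases eq_or_ne k j with rfl | hkj
    · simp [hki]
    · simpa [hki, hkj] using hk
  refine ⟨⟨fun k => hε.trans (hge k), ?_⟩, fun k _ => hge k⟩
  simp [sum_add_distrib, ← mul_sum, hq.1.2]

theorem marginal_le_of_isMaxOn_truncSimplex (hε : 0 < ε) {q : n → ℝ} (hq : q ∈ truncSimplex n ε)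
    (hmax : IsMaxOn (logBarrierPayoff M a b · q) (truncSimplex n ε) q) (i : n) {j : n}
    (hj : ε < q j) : a * (M *ᵥ q) i + b / q i ≤ a * (M *ᵥ q) j + b / q j := by
  classical
  rcases eq_or_ne i j with rfl | hij
  · exact le_rfl
  have hvar := sum_sub_mul_le_zero_of_isMaxOn convex_truncSimplex hq
    (fun k => truncSimplex_subset_pi_Ioi hε hq k trivial) hmax
    (add_smul_single_sub_single_mem_truncSimplex hε.le hq hij)
  have hsum : ∑ k, ((q + (q j - ε) • (Pi.single i 1 - Pi.single j 1) : n → ℝ) k - q k) *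
      (a * (M *ᵥ q) k + b / q k) =
      (q j - ε) * ((a * (M *ᵥ q) i + b / q i) - (a * (M *ᵥ q) j + b / q j)) := by
    simp [Pi.single_apply, mul_sub, sub_mul, sum_sub_distrib]
  rw [hsum] at hvar
  nlinarith

theorem lt_of_isMaxOn_truncSimplex [Nonempty n] (hbound : ∀ i j, |M i j| ≤ 1) (ha : 0 ≤ a)
    (hb : 0 < b) (hε : 0 < ε) (hεn : ε < (Fintype.card n : ℝ)⁻¹)
    (hεab : 2 * a + b * Fintype.card n < b / ε) {q : n → ℝ} (hq : q ∈ truncSimplex n ε)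
    (hmax : IsMaxOn (logBarrierPayoff M a b · q) (truncSimplex n ε) q) (i : n) : ε < q i := by
  by_contra! hqi
  obtain ⟨j, -, hj⟩ : ∃ j ∈ univ, (Fintype.card n : ℝ)⁻¹ ≤ q j :=
    exists_le_of_sum_le univ_nonempty (by simp [hq.1.2])
  have hle := marginal_le_of_isMaxOn_truncSimplex hε hq hmax i (hεn.trans_le hj)
  have hMi := (abs_le.1 (abs_mulVec_le_one hbound hq.1 i)).1
  have hMj := (abs_le.1 (abs_mulVec_le_one hbound hq.1 j)).2
  have hqi_pos : 0 < q i := truncSimplex_subset_pi_Ioi hε hq i trivial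
  have hbi : b / ε ≤ b / q i := div_le_div_of_nonneg_left hb.le hqi_pos hqi
  have hbj : b / q j ≤ b * Fintype.card n :=
    calc b / q j ≤ b / (Fintype.card n : ℝ)⁻¹ :=
          div_le_div_of_nonneg_left hb.le (by simp [Fintype.card_pos]) hj
      _ = b * Fintype.card n := div_inv_eq_mul _ _
  nlinarith [mul_le_mul_of_nonneg_left hMi ha, mul_le_mul_of_nonneg_left hMj ha]

end TruncSimplex

theorem exists_pos_marginal_eq {n : Type*} [Fintype n] [Nonempty n] {M : Matrix n n ℝ}
    (hM : ∀ i j, M j i = -M i j) (hbound : ∀ i j, |M i j| ≤ 1) {a b : ℝ} (ha : 0 ≤ a)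
    (hb : 0 < b) :
    ∃ q ∈ stdSimplex ℝ n, (∀ i, 0 < q i) ∧ ∀ i, a * (M *ᵥ q) i + b / q i = b * Fintype.card n := by
  set N : ℝ := (Fintype.card n : ℝ)
  have hN : 0 < N := by simp [N, Fintype.card_pos]
  -- small enough that at a wall `x i = ε` the barrier slope `b / ε` beats any payoff difference
  set ε := b / (2 * a + b * (N + 1))
  have hε : 0 < ε := by positivity
  have hεn : ε < N⁻¹ :=
    calc ε ≤ b / (b * (N + 1)) := div_le_div_of_nonneg_left hb.le (by positivity) (by linarith)
      _ = (N + 1)⁻¹ := by field_simp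
      _ < N⁻¹ := (inv_lt_inv₀ (by positivity) hN).2 (by linarith)
  have hεab : 2 * a + b * N < b / ε := by
    rw [div_div_cancel₀ hb.ne']; linarith
  obtain ⟨q, hq, hle⟩ := exists_forall_le_zero_of_skew (truncSimplex_nonempty hεn.le)
    convex_truncSimplex isCompact_truncSimplex (fun x _ y _ => logBarrierPayoff_swap hM x y)
    (fun y _ => (continuousOn_logBarrierPayoff y).mono (truncSimplex_subset_pi_Ioi hε))
    (fun y _ => (concaveOn_logBarrierPayoff hb.le y).subset (truncSimplex_subset_pi_Ioi hε)
      convex_truncSimplex)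
  have hmax : IsMaxOn (logBarrierPayoff M a b · q) (truncSimplex n ε) q := fun x hx => by
    simpa [logBarrierPayoff_self hM] using hle x hx
  set μ := fun i => a * (M *ᵥ q) i + b / q i
  have hqpos : ∀ i, 0 < q i := fun i => truncSimplex_subset_pi_Ioi hε hq i trivial
  have hint : ∀ i, ε < q i := lt_of_isMaxOn_truncSimplex hbound ha hb hε hεn hεab hq hmax
  have hconst : ∀ i j, μ i = μ j := fun i j =>
    (marginal_le_of_isMaxOn_truncSimplex hε hq hmax i (hint j)).antisymm
      (marginal_le_of_isMaxOn_truncSimplex hε hq hmax j (hint i))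
  have hsum : ∑ i, q i * μ i = b * N := by
    have hterm : ∀ i, q i * μ i = a * (q i * (M *ᵥ q) i) + b := fun i => by
      simp only [μ]; field_simp [(hqpos i).ne']
    have hskew := dotProduct_mulVec_self_of_skew hM q
    simp only [dotProduct] at hskew
    simp [hterm, sum_add_distrib, ← mul_sum, hskew, N, mul_comm]
  refine ⟨q, hq.1, hqpos, fun i => ?_⟩
  change μ i = b * N
  rw [← hsum]
  simp_rw [hconst _ i, ← sum_mul, hq.1.2, one_mul]

section Fvec
variable {d : ℕ} {Mt : Matrix (Fin d) (Fin d) ℝ} {r : ℝ}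

theorem continuous_fvec : Continuous (fvec d Mt r) := by
  unfold fvec
  fun_prop

theorem sum_fvec_eq_zero (hskew : ∀ i j, Mt j i = -Mt i j) {p : Fin d → ℝ}
    (hp : p ∈ unitSimplex d) : ∑ i, fvec d Mt r p i = 0 := by
  have hd : (d : ℝ) ≠ 0 := by
    intro h
    obtain rfl : d = 0 := by exact_mod_cast h
    simp [unitSimplex] at hp
  have hskew' := dotProduct_mulVec_self_of_skew hskew p
  simp only [dotProduct] at hskew'
  simp only [fvec, sum_add_distrib, mul_assoc, ← mul_sum, mul_sub, sum_sub_distrib, hskew', hp.2]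
  simp [hd]

theorem add_inv_two_mul_fvec_nonneg (hbound : ∀ i j, |Mt i j| ≤ 1) (hr0 : 0 ≤ r) (hr1 : r ≤ 1)
    {p : Fin d → ℝ} (hp : p ∈ unitSimplex d) (i : Fin d) : 0 ≤ p i + 2⁻¹ * fvec d Mt r p i := by
  have hM := (abs_le.1 (abs_mulVec_le_one hbound hp i)).1
  have hpi := hp.1 i
  have : 0 ≤ (1 - r) * p i * (1 + (Mt *ᵥ p) i) := by
    have := mul_nonneg (mul_nonneg (sub_nonneg.2 hr1) hpi) (neg_le_iff_add_nonneg'.1 hM)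
    linarith
  have : 0 ≤ r * (1 / (d : ℝ)) := by positivity
  simp only [fvec]
  nlinarith [mul_nonneg hr0 hpi]

theorem add_inv_two_smul_fvec_mem_unitSimplex (hskew : ∀ i j, Mt j i = -Mt i j)
    (hbound : ∀ i j, |Mt i j| ≤ 1) (hr0 : 0 ≤ r) (hr1 : r ≤ 1) {p : Fin d → ℝ}
    (hp : p ∈ unitSimplex d) : p + (2 : ℝ)⁻¹ • fvec d Mt r p ∈ unitSimplex d := by
  refine ⟨add_inv_two_mul_fvec_nonneg hbound hr0 hr1 hp, ?_⟩
  simp [sum_add_distrib, ← mul_sum, hp.2, sum_fvec_eq_zero hskew hp]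

theorem exists_fvec_eq_zero (hd : 1 ≤ d) (hskew : ∀ i j, Mt j i = -Mt i j)
    (hbound : ∀ i j, |Mt i j| ≤ 1) (hr0 : 0 ≤ r) (hr1 : r ≤ 1) :
    ∃ p ∈ unitSimplex d, fvec d Mt r p = 0 := by
  have : Nonempty (Fin d) := ⟨⟨0, hd⟩⟩
  rcases hr0.eq_or_lt with rfl | hr
  · have hdiag : ∀ i, Mt i i = 0 := fun i => by linarith [hskew i i]
    refine ⟨Pi.single ⟨0, hd⟩ 1, single_mem_stdSimplex ℝ _, funext fun i => ?_⟩
    rcases eq_or_ne i ⟨0, hd⟩ with rfl | hi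
    · simp [fvec, hdiag]
    · simp [fvec, hi]
  · have hdr : (0 : ℝ) < d := by exact_mod_cast hd
    obtain ⟨q, hq, hqpos, hμ⟩ := exists_pos_marginal_eq (a := 2 * (1 - r)) (b := r / d)
      hskew hbound (by linarith) (by positivity)
    refine ⟨q, hq, funext fun i => ?_⟩
    have h := congrArg (q i * ·) (hμ i)
    simp only [Fintype.card_fin, div_mul_cancel₀ _ hdr.ne', mul_add,
      mul_div_cancel₀ _ (hqpos i).ne'] at h
    simp only [fvec, Pi.zero_apply]
    linear_combination h

end Fvec

theorem stmt0 (d : ℕ) (hd : 1 ≤ d) (Mt : Matrix (Fin d) (Fin d) ℝ)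
    (hskew : ∀ i j, Mt j i = - Mt i j) (hbound : ∀ i j, |Mt i j| ≤ 1)
    (r : ℝ) (hr0 : 0 ≤ r) (hr1 : r ≤ 1) :
    ContinuousOn (fun p => p + (2 : ℝ)⁻¹ • fvec d Mt r p) (unitSimplex d) ∧
    (∀ p ∈ unitSimplex d, ∑ i, fvec d Mt r p i = 0) ∧
    (∀ p ∈ unitSimplex d, ∀ i, 0 ≤ p i + (2 : ℝ)⁻¹ * fvec d Mt r p i) ∧
    (∀ p ∈ unitSimplex d, p + (2 : ℝ)⁻¹ • fvec d Mt r p ∈ unitSimplex d) ∧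
    (∃ p ∈ unitSimplex d, p + (2 : ℝ)⁻¹ • fvec d Mt r p = p) ∧
    (∃ p ∈ unitSimplex d, fvec d Mt r p = 0) := by
  have hsum : ∀ p ∈ unitSimplex d, ∑ i, fvec d Mt r p i = 0 :=
    fun p hp => sum_fvec_eq_zero hskew hp
  have hnonneg : ∀ p ∈ unitSimplex d, ∀ i, 0 ≤ p i + (2 : ℝ)⁻¹ * fvec d Mt r p i :=
    fun p hp => add_inv_two_mul_fvec_nonneg hbound hr0 hr1 hp
  have hcont : Continuous (fvec d Mt r) := continuous_fvec
  obtain ⟨p, hp, hzero⟩ := exists_fvec_eq_zero hd hskew hbound hr0 hr1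
  refine ⟨by fun_prop, hsum, hnonneg,
    fun p hp => add_inv_two_smul_fvec_mem_unitSimplex hskew hbound hr0 hr1 hp,
    ⟨p, hp, by simp [hzero]⟩, ⟨p, hp, hzero⟩⟩
end

section
/- Let r ∈ (0,1]. Then every zero p ∈ Δ of f^{(r)} has strictly positive coordinates (p_i > 0 for all i) and satisfies 2(1−r)(M̃p)_i = r(1 − 1/(d p_i)) for all i ∈ [d]; moreover f^{(r)} has at most one zero in Δ: if f^{(r)}(p) = f^{(r)}(q) = 0 with p, q ∈ Δ, then p = q. -/
open Finset

/-!
At a zero `p` of `f^{(r)}` the `i`-th equation reads `2(1−r) p_i (M̃p)_i = r(p_i − 1/d)`, so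
`p_i = 0` is impossible when `r > 0`, and dividing by `p_i` gives the formula for `M̃p`.
For two zeros `p, q`, subtracting these formulas gives `2(1−r)(M̃(p−q))_i = (r/d)(1/q_i − 1/p_i)`.
Pairing with `p − q` kills the left side by skew-symmetry, leaving
`∑ (p_i − q_i)²/(p_i q_i) = 0`, whence `p = q`.
-/

open Matrix

theorem Matrix.dotProduct_mulVec_self_eq_zero_of_transpose_eq_neg {n R : Type*} [Fintype n]
    [CommRing R] [NoZeroDivisors R] [CharZero R] {M : Matrix n n R} (hM : Mᵀ = -M)
    (x : n → R) : x ⬝ᵥ M *ᵥ x = 0 := by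
  refine self_eq_neg.mp ?_
  calc x ⬝ᵥ M *ᵥ x = Mᵀ *ᵥ x ⬝ᵥ x := by rw [dotProduct_mulVec, mulVec_transpose]
    _ = -(x ⬝ᵥ M *ᵥ x) := by rw [hM, neg_mulVec, neg_dotProduct, dotProduct_comm]

theorem eq_of_sum_sub_mul_inv_sub_inv_eq_zero {ι : Type*} [Fintype ι] {p q : ι → ℝ}
    (hp : ∀ i, 0 < p i) (hq : ∀ i, 0 < q i)
    (h : ∑ i, (p i - q i) * ((q i)⁻¹ - (p i)⁻¹) = 0) : p = q := by
  have hterm : ∀ i, (p i - q i) * ((q i)⁻¹ - (p i)⁻¹) = (p i - q i) ^ 2 / (p i * q i) := by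
    intro i
    field_simp [(hp i).ne', (hq i).ne']
  simp only [hterm] at h
  have hnonneg : ∀ i ∈ univ, 0 ≤ (p i - q i) ^ 2 / (p i * q i) := fun i _ => by
    have := hp i; have := hq i; positivity
  funext i
  have hi := (sum_eq_zero_iff_of_nonneg hnonneg).mp h i (mem_univ i)
  rw [div_eq_zero_iff, sq_eq_zero_iff, sub_eq_zero] at hi
  exact hi.resolve_right (mul_pos (hp i) (hq i)).ne'

section fvec

variable {d : ℕ} {Mt : Matrix (Fin d) (Fin d) ℝ} {r : ℝ} {p q : Fin d → ℝ}

theorem pos_of_fvec_eq_zero (hr : 0 < r) (hp : ∀ i, 0 ≤ p i) (hf : fvec d Mt r p = 0)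
    (i : Fin d) : 0 < p i := by
  have hd : (0 : ℝ) < d := Nat.cast_pos.mpr i.pos
  refine (hp i).lt_of_ne fun hpi => ?_
  have hfi := congrFun hf i
  simp only [fvec, ← hpi, Pi.zero_apply, mul_zero, zero_mul, zero_add, sub_zero] at hfi
  have : 0 < r * (1 / (d : ℝ)) := by positivity
  exact this.ne' hfi

theorem mulVec_eq_of_fvec_eq_zero (hf : fvec d Mt r p = 0) {i : Fin d} (hpi : 0 < p i) :
    2 * (1 - r) * (Mt *ᵥ p) i = r * (1 - 1 / ((d : ℝ) * p i)) := by
  have hd : (d : ℝ) ≠ 0 := (Nat.cast_pos.mpr i.pos).ne'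
  have hfi := congrFun hf i
  simp only [fvec, Pi.zero_apply] at hfi
  field_simp at hfi ⊢
  linear_combination hfi

theorem eq_of_fvec_eq_zero (hd : 0 < d) (hskew : Mtᵀ = -Mt) (hr : 0 < r)
    (hp : ∀ i, 0 ≤ p i) (hq : ∀ i, 0 ≤ q i)
    (hfp : fvec d Mt r p = 0) (hfq : fvec d Mt r q = 0) : p = q := by
  have hp' := pos_of_fvec_eq_zero hr hp hfp
  have hq' := pos_of_fvec_eq_zero hr hq hfq
  have hterm : ∀ i, r / d * ((p i - q i) * ((q i)⁻¹ - (p i)⁻¹))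
      = 2 * (1 - r) * ((p - q) i * (Mt *ᵥ (p - q)) i) := fun i => by
    simp only [mulVec_sub, Pi.sub_apply]
    linear_combination (p i - q i) * (mulVec_eq_of_fvec_eq_zero hfq (hq' i)
      - mulVec_eq_of_fvec_eq_zero hfp (hp' i))
  have hsum : r / d * ∑ i, (p i - q i) * ((q i)⁻¹ - (p i)⁻¹) = 0 := by
    rw [mul_sum, sum_congr rfl fun i _ => hterm i, ← mul_sum,
      ← dotProduct, dotProduct_mulVec_self_eq_zero_of_transpose_eq_neg hskew, mul_zero]
  have hrd : r / d ≠ 0 := by have : (0 : ℝ) < d := Nat.cast_pos.mpr hd; positivity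
  exact eq_of_sum_sub_mul_inv_sub_inv_eq_zero hp' hq' ((mul_eq_zero.mp hsum).resolve_left hrd)

end fvec

theorem stmt1_general (d : ℕ) (hd : 1 ≤ d) (Mt : Matrix (Fin d) (Fin d) ℝ)
    (hskew : ∀ i j, Mt j i = - Mt i j)
    (r : ℝ) (hr0 : 0 < r) :
    (∀ p ∈ unitSimplex d, fvec d Mt r p = 0 →
      (∀ i, 0 < p i) ∧
      (∀ i, 2 * (1 - r) * Mt.mulVec p i = r * (1 - 1 / ((d : ℝ) * p i)))) ∧
    (∀ p ∈ unitSimplex d, ∀ q ∈ unitSimplex d,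
      fvec d Mt r p = 0 → fvec d Mt r q = 0 → p = q) := by
  refine ⟨fun p hp hf => ?_, fun p hp q hq hfp hfq => ?_⟩
  · have hpos := pos_of_fvec_eq_zero hr0 hp.1 hf
    exact ⟨hpos, fun i => mulVec_eq_of_fvec_eq_zero hf (hpos i)⟩
  · exact eq_of_fvec_eq_zero hd (Matrix.ext fun i j => hskew i j) hr0 hp.1 hq.1 hfp hfq

theorem stmt1 (d : ℕ) (hd : 1 ≤ d) (Mt : Matrix (Fin d) (Fin d) ℝ)
    (hskew : ∀ i j, Mt j i = - Mt i j) (hbound : ∀ i j, |Mt i j| ≤ 1)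
    (r : ℝ) (hr0 : 0 < r) (hr1 : r ≤ 1) :
    (∀ p ∈ unitSimplex d, fvec d Mt r p = 0 →
      (∀ i, 0 < p i) ∧
      (∀ i, 2 * (1 - r) * Mt.mulVec p i = r * (1 - 1 / ((d : ℝ) * p i)))) ∧
    (∀ p ∈ unitSimplex d, ∀ q ∈ unitSimplex d,
      fvec d Mt r p = 0 → fvec d Mt r q = 0 → p = q) :=
  stmt1_general d hd Mt hskew r hr0
end

section
/- For every δ > 0 there exists r₀ > 0 such that for all r with 0 < r ≤ r₀, the unique zero p^{(r)} ∈ Δ of f^{(r)} lies in B_δ(ML), i.e., there is a maximal lottery q with |p^{(r)} − q| < δ. -/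
open Finset

/-- The set of maximal lotteries for the majority-margin matrix `M̃`:
lotteries `p` with `(M̃p)_i ≤ 0` for all `i`. -/
def maxLotteries (d : ℕ) (Mt : Matrix (Fin d) (Fin d) ℝ) : Set (Fin d → ℝ) :=
  {p | p ∈ unitSimplex d ∧ ∀ i, Mt.mulVec p i ≤ 0}

/-!
A zero `p` of `f^{(r)}` with `r ≤ 1/2` is an approximate maximal lottery: at a coordinate with
`p_i > 0` (and every coordinate has it, since `f^{(r)}_i = r/d` where `p_i = 0`), the equation
`2(1-r) p_i (M̃p)_i = r (p_i - 1/d) < r p_i` gives `(M̃p)_i < r/(2(1-r)) ≤ r`. By compactness of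
the simplex, lotteries with `M̃p ≤ ε` componentwise lie within `δ` of `ML` once `ε` is small.
-/

theorem IsCompact.exists_pos_forall_le_mem_of_isOpen {X ι : Type*} [TopologicalSpace X]
    {K U : Set X} (hK : IsCompact K) (hU : IsOpen U) {g : ι → X → ℝ}
    (hg : ∀ i, Continuous (g i)) (hKU : ∀ p ∈ K, (∀ i, g i p ≤ 0) → p ∈ U) :
    ∃ ε > 0, ∀ p ∈ K, (∀ i, g i p ≤ ε) → p ∈ U := by
  let W : ℕ → Set X := fun n => {p | ∃ i, 1 / ((n : ℝ) + 1) < g i p}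
  have hW_open : ∀ n, IsOpen (W n) := fun n => by
    simp only [W, Set.ofPred_exists]
    exact isOpen_iUnion fun i => isOpen_lt continuous_const (hg i)
  have hW_mono : Monotone W := fun m n hmn p ⟨i, hi⟩ =>
    ⟨i, lt_of_le_of_lt (Nat.one_div_le_one_div hmn) hi⟩
  have hW_cover : K \ U ⊆ ⋃ n, W n := fun p ⟨hpK, hpU⟩ => by
    obtain ⟨i, hi⟩ : ∃ i, 0 < g i p := by
      by_contra! h
      exact hpU (hKU p hpK h)
    obtain ⟨n, hn⟩ := exists_nat_one_div_lt hi
    exact Set.mem_iUnion.2 ⟨n, i, hn⟩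
  obtain ⟨n, hn⟩ := (hK.diff hU).elim_directed_cover W hW_open hW_cover hW_mono.directed_le
  refine ⟨1 / ((n : ℝ) + 1), by positivity, fun p hpK hp => ?_⟩
  by_contra hpU
  obtain ⟨i, hi⟩ := hn ⟨hpK, hpU⟩
  exact (hp i).not_gt hi

theorem isCompact_unitSimplex (d : ℕ) : IsCompact (unitSimplex d) :=
  isCompact_stdSimplex ℝ (Fin d)

theorem isOpen_setOf_exists_l1dist_lt {d : ℕ} (S : Set (Fin d → ℝ)) (δ : ℝ) :
    IsOpen {p | ∃ q ∈ S, l1dist p q < δ} := by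
  have hS : {p | ∃ q ∈ S, l1dist p q < δ} = ⋃ q ∈ S, {p | l1dist p q < δ} := by ext; simp
  rw [hS]
  exact isOpen_biUnion fun q _ => isOpen_lt (by unfold l1dist; fun_prop) continuous_const

theorem exists_pos_forall_mulVec_le_exists_maxLotteries_l1dist_lt (d : ℕ)
    (Mt : Matrix (Fin d) (Fin d) ℝ) {δ : ℝ} (hδ : 0 < δ) :
    ∃ ε > 0, ∀ p ∈ unitSimplex d, (∀ i, Mt.mulVec p i ≤ ε) →
      ∃ q ∈ maxLotteries d Mt, l1dist p q < δ :=
  (isCompact_unitSimplex d).exists_pos_forall_le_mem_of_isOpen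
    (isOpen_setOf_exists_l1dist_lt _ δ) (fun i => by fun_prop)
    fun p hp hMp => ⟨p, ⟨hp, hMp⟩, by simpa [l1dist] using hδ⟩

theorem mulVec_le_of_fvec_eq_zero {d : ℕ} {Mt : Matrix (Fin d) (Fin d) ℝ} {r : ℝ}
    (hr : 0 < r) (hr' : r ≤ 1 / 2) {p : Fin d → ℝ} (hp : ∀ i, 0 ≤ p i)
    (hf : fvec d Mt r p = 0) (i : Fin d) : Mt.mulVec p i ≤ r := by
  have hfi : 2 * (1 - r) * p i * Mt.mulVec p i + r * (1 / (d : ℝ) - p i) = 0 := congrFun hf i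
  have hinv_d : (0 : ℝ) < 1 / d := by have := i.pos; positivity
  have hpi : 0 < p i := by
    refine (hp i).lt_of_ne fun h => ?_
    rw [← h] at hfi
    nlinarith
  by_contra! h
  have hpMp : 0 < p i * Mt.mulVec p i := mul_pos hpi (hr.trans h)
  nlinarith [mul_lt_mul_of_pos_left h hpi, mul_nonneg (by linarith : 0 ≤ 1 - 2 * r) hpMp.le,
    mul_pos hr hinv_d]

theorem stmt2_general (d : ℕ) (Mt : Matrix (Fin d) (Fin d) ℝ)
    (δ : ℝ) (hδ : 0 < δ) :
    ∃ r₀ > 0, ∀ r : ℝ, 0 < r → r ≤ r₀ → r ≤ 1 →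
      ∀ p ∈ unitSimplex d, fvec d Mt r p = 0 →
        ∃ q ∈ maxLotteries d Mt, l1dist p q < δ := by
  obtain ⟨ε, hε, hnear⟩ := exists_pos_forall_mulVec_le_exists_maxLotteries_l1dist_lt d Mt hδ
  refine ⟨min ε (1 / 2), by positivity, fun r hr hr₀ _ p hp hf => hnear p hp fun i => ?_⟩
  calc Mt.mulVec p i ≤ r := mulVec_le_of_fvec_eq_zero hr (hr₀.trans (min_le_right _ _)) hp.1 hf i
    _ ≤ ε := hr₀.trans (min_le_left _ _)

theorem stmt2 (d : ℕ) (hd : 1 ≤ d) (Mt : Matrix (Fin d) (Fin d) ℝ)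
    (hskew : ∀ i j, Mt j i = - Mt i j) (hbound : ∀ i j, |Mt i j| ≤ 1)
    (hML : (maxLotteries d Mt).Nonempty)
    (δ : ℝ) (hδ : 0 < δ) :
    ∃ r₀ > 0, ∀ r : ℝ, 0 < r → r ≤ r₀ → r ≤ 1 →
      ∀ p ∈ unitSimplex d, fvec d Mt r p = 0 →
        ∃ q ∈ maxLotteries d Mt, l1dist p q < δ :=
  stmt2_general d Mt δ hδ
end

section
/- For every r ∈ [0,1] and every p₀ ∈ Δ, the initial value problem dy/dt(t) = f^{(r)}(y(t)), y(0) = p₀, has a unique continuously differentiable solution y : [0,∞) → ℝ^d, and this solution satisfies y(t) ∈ Δ for all t ≥ 0. -/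
open Finset Set

/-! The field `fvec` is polynomial, hence `C¹`, so Picard–Lindelöf gives solutions starting
anywhere in the simplex on intervals of one common length `ε`, and its Lipschitz bounds on balls
give uniqueness. Skew-symmetry of `Mt` kills the quadratic term of `∑ i, fvec p i`, which makes the
simplex forward invariant; the local solutions can therefore be restarted every `ε` and glued into
a solution on `[0, ∞)`. -/

open Metric Matrix
open scoped NNReal

section Ode

variable {E : Type*} [NormedAddCommGroup E] [NormedSpace ℝ E]

lemma exists_nat_mem_Ico_mul {ε t : ℝ} (hε : 0 < ε) (ht : 0 ≤ t) :
    ∃ n : ℕ, t ∈ Ico (n * ε) (n * ε + ε) := by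
  refine ⟨⌊t / ε⌋₊, ?_, ?_⟩
  · rw [← le_div_iff₀ hε]
    exact Nat.floor_le (div_nonneg ht hε.le)
  · rw [← add_one_mul, ← div_lt_iff₀ hε]
    exact Nat.lt_floor_add_one _

lemma exists_nat_mem_Ioc_mul {ε t : ℝ} (hε : 0 < ε) (ht : 0 < t) :
    ∃ n : ℕ, t ∈ Ioc (n * ε) (n * ε + ε) := by
  obtain ⟨n, hn⟩ := Nat.exists_eq_add_one_of_ne_zero (Nat.ceil_pos.2 (div_pos ht hε)).ne'
  refine ⟨n, ?_, ?_⟩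
  · rw [← lt_div_iff₀ hε, ← Nat.lt_ceil, hn]
    exact n.lt_succ_self
  · rw [← add_one_mul, ← div_le_iff₀ hε, ← Nat.cast_add_one, ← hn]
    exact Nat.le_ceil _

lemma floor_div_eq_of_mem_Ico {ε t : ℝ} (hε : 0 < ε) {n : ℕ}
    (ht : t ∈ Ico (n * ε) (n * ε + ε)) : ⌊t / ε⌋₊ = n := by
  rw [Nat.floor_eq_iff (div_nonneg ((by positivity : (0 : ℝ) ≤ n * ε).trans ht.1) hε.le),
    le_div_iff₀ hε, div_lt_iff₀ hε, add_one_mul]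
  exact ht

theorem exists_forall_mem_Ici_hasDerivWithinAt_of_forall_mem_Icc {v : ℝ → E → E} {S : Set E}
    {ε : ℝ} (hε : 0 < ε)
    (hloc : ∀ t₀, ∀ x ∈ S, ∃ α : ℝ → E, α t₀ = x ∧ ∀ t ∈ Icc t₀ (t₀ + ε),
      HasDerivWithinAt α (v t (α t)) (Icc t₀ (t₀ + ε)) t ∧ α t ∈ S)
    {x : E} (hx : x ∈ S) :
    ∃ y : ℝ → E, y 0 = x ∧
      ∀ t ∈ Ici (0 : ℝ), HasDerivWithinAt y (v t (y t)) (Ici 0) t ∧ y t ∈ S := by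
  choose α hα₀ hα using hloc
  -- `p n` is the state at time `n * ε`, from which the `n`-th local solution `β n` starts.
  let p : ℕ → S := fun n => Nat.rec ⟨x, hx⟩
    (fun m q => ⟨α (m * ε) q q.2 (m * ε + ε), (hα _ _ q.2 _ ⟨by linarith, le_rfl⟩).2⟩) n
  let β : ℕ → ℝ → E := fun n => α (n * ε) (p n).1 (p n).2
  let y : ℝ → E := fun t => β ⌊t / ε⌋₊ t
  have hy : ∀ n : ℕ, EqOn y (β n) (Icc (n * ε) (n * ε + ε)) := by
    intro n t ht
    rcases ht.2.lt_or_eq with hlt | rfl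
    · simp only [y, floor_div_eq_of_mem_Ico hε ⟨ht.1, hlt⟩]
    · have hnext : ((n + 1 : ℕ) : ℝ) * ε = n * ε + ε := by push_cast; ring
      have hfloor : ⌊(n * ε + ε) / ε⌋₊ = n + 1 :=
        floor_div_eq_of_mem_Ico hε ⟨hnext.le, by linarith⟩
      calc y (n * ε + ε) = β (n + 1) (((n + 1 : ℕ) : ℝ) * ε) := by
            simp only [y, hfloor, hnext]
        _ = β n (n * ε + ε) := hα₀ _ _ _
  have hyβ : ∀ n : ℕ, ∀ t ∈ Icc (n * ε) (n * ε + ε),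
      HasDerivWithinAt y (v t (y t)) (Icc (n * ε) (n * ε + ε)) t ∧ y t ∈ S := by
    intro n t ht
    rw [hy n ht]
    exact ⟨(hα _ _ _ t ht).1.congr (hy n) (hy n ht), (hα _ _ _ t ht).2⟩
  refine ⟨y, ?_, fun t ht => ?_⟩
  · simpa using (hy 0 (left_mem_Icc.2 (le_add_of_nonneg_right hε.le))).trans (hα₀ _ x hx)
  obtain ⟨n, hn⟩ := exists_nat_mem_Ico_mul hε ht
  have hright : HasDerivWithinAt y (v t (y t)) (Ici t) t :=
    (hyβ n t (Ico_subset_Icc_self hn)).1.mono_of_mem_nhdsWithin (Icc_mem_nhdsGE_of_mem hn)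
  refine ⟨?_, (hyβ n t (Ico_subset_Icc_self hn)).2⟩
  rcases (mem_Ici.1 ht).eq_or_lt with rfl | hpos
  · exact hright
  obtain ⟨m, hm⟩ := exists_nat_mem_Ioc_mul hε hpos
  have hleft : HasDerivWithinAt y (v t (y t)) (Iic t) t :=
    (hyβ m t (Ioc_subset_Icc_self hm)).1.mono_of_mem_nhdsWithin (Icc_mem_nhdsLE_of_mem hm)
  exact (hleft.union hright).mono (by simp)

variable [ProperSpace E] {f : E → E}

theorem ContDiff.exists_pos_forall_mem_closedBall_exists_hasDerivWithinAt
    (hf : ContDiff ℝ 1 f) (x₀ : E) (R : ℝ≥0) :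
    ∃ ε > (0 : ℝ), ∀ t₀ : ℝ, ∀ x ∈ closedBall x₀ R, ∃ α : ℝ → E, α t₀ = x ∧
      ∀ t ∈ Icc t₀ (t₀ + ε), HasDerivWithinAt α (f (α t)) (Icc t₀ (t₀ + ε)) t := by
  obtain ⟨K, hK⟩ := hf.contDiffOn.exists_lipschitzOnWith one_ne_zero
    (convex_closedBall x₀ (R + 1)) (isCompact_closedBall x₀ (R + 1))
  obtain ⟨C, hC⟩ := (isCompact_closedBall x₀ (R + 1)).exists_bound_of_continuousOn
    hf.continuous.continuousOn
  set L : ℝ≥0 := C.toNNReal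
  refine ⟨1 / (L + 1), by positivity, fun t₀ x hx => ?_⟩
  have hpl : IsPicardLindelof (fun _ => f) (tmin := t₀) (tmax := t₀ + 1 / (L + 1))
      ⟨t₀, le_rfl, le_add_of_nonneg_right (by positivity)⟩ x₀ (R + 1) R L K := by
    refine .of_time_independent (fun y hy => (hC y (by exact_mod_cast hy)).trans
      (Real.le_coe_toNNReal C)) (by exact_mod_cast hK) ?_
    push_cast
    rw [add_sub_cancel_left, sub_self, max_eq_left (by positivity), add_sub_cancel_left,
      mul_one_div, div_le_one (by positivity)]
    linarith
  exact hpl.exists_eq_forall_mem_Icc_hasDerivWithinAt hx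

theorem ContDiff.eqOn_Ici_of_hasDerivWithinAt (hf : ContDiff ℝ 1 f) {a : ℝ} {y z : ℝ → E}
    (hy : ∀ t ∈ Ici a, HasDerivWithinAt y (f (y t)) (Ici a) t)
    (hz : ∀ t ∈ Ici a, HasDerivWithinAt z (f (z t)) (Ici a) t) (ha : y a = z a) :
    EqOn y z (Ici a) := by
  intro T hT
  have hcont : ∀ w : ℝ → E, (∀ t ∈ Ici a, HasDerivWithinAt w (f (w t)) (Ici a) t) →
      ContinuousOn w (Icc a T) := fun w hw t ht =>
    (hw t ht.1).continuousWithinAt.mono Icc_subset_Ici_self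
  have hright : ∀ w : ℝ → E, (∀ t ∈ Ici a, HasDerivWithinAt w (f (w t)) (Ici a) t) →
      ∀ t ∈ Ico a T, HasDerivWithinAt w (f (w t)) (Ici t) t := fun w hw t ht =>
    (hw t ht.1).mono (Ici_subset_Ici.2 ht.1)
  obtain ⟨Cy, hCy⟩ := isCompact_Icc.exists_bound_of_continuousOn (hcont y hy)
  obtain ⟨Cz, hCz⟩ := isCompact_Icc.exists_bound_of_continuousOn (hcont z hz)
  obtain ⟨K, hK⟩ := hf.contDiffOn.exists_lipschitzOnWith one_ne_zero
    (convex_closedBall (0 : E) (max Cy Cz)) (isCompact_closedBall 0 (max Cy Cz))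
  exact ODE_solution_unique_of_mem_Icc_right (v := fun _ => f) (fun _ _ => hK)
    (hcont y hy) (hright y hy)
    (fun t ht => mem_closedBall_zero_iff.2 ((hCy t (Ico_subset_Icc_self ht)).trans
      (le_max_left _ _)))
    (hcont z hz) (hright z hz)
    (fun t ht => mem_closedBall_zero_iff.2 ((hCz t (Ico_subset_Icc_self ht)).trans
      (le_max_right _ _)))
    ha ⟨hT, le_rfl⟩

end Ode

theorem nonneg_of_hasDerivWithinAt_mul_add {u c q : ℝ → ℝ} {a b : ℝ}
    (hc : ContinuousOn c (Icc a b)) (hq : ∀ t ∈ Icc a b, 0 ≤ q t)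
    (hu : ∀ t ∈ Icc a b, HasDerivWithinAt u (c t * u t + q t) (Icc a b) t) (ha : 0 ≤ u a) :
    ∀ t ∈ Icc a b, 0 ≤ u t := by
  intro t ht
  have hab : a ≤ b := ht.1.trans ht.2
  set c' := IccExtend hab (Icc a b |>.domRestrict c)
  have hc' : Continuous c' := (continuousOn_iff_continuous_domRestrict.1 hc).Icc_extend'
  have hcc' : ∀ s ∈ Icc a b, c' s = c s := fun s hs => IccExtend_of_mem hab _ hs
  -- integrating factor: `exp (-A) * u` has derivative `exp (-A) * q ≥ 0`
  set A : ℝ → ℝ := fun s => ∫ τ in a..s, c' τ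
  have hw : ∀ s ∈ Icc a b, HasDerivWithinAt (fun s => Real.exp (-A s) * u s)
      (Real.exp (-A s) * q s) (Icc a b) s := by
    intro s hs
    refine ((((hc'.integral_hasStrictDerivAt a s).hasDerivAt.neg.exp).hasDerivWithinAt).mul
      (hu s hs)).congr_deriv ?_
    rw [hcc' s hs]; simp only [A, Pi.neg_apply]; ring
  have hmono : MonotoneOn (fun s => Real.exp (-A s) * u s) (Icc a b) :=
    monotoneOn_of_hasDerivWithinAt_nonneg (convex_Icc a b)
      (fun s hs => (hw s hs).continuousWithinAt)
      (fun s hs => (hw s (interior_subset hs)).mono interior_subset)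
      (fun s hs => mul_nonneg (Real.exp_pos _).le (hq s (interior_subset hs)))
  have := hmono (left_mem_Icc.2 hab) ht ht.1
  simp only [A, intervalIntegral.integral_same, neg_zero, Real.exp_zero, one_mul] at this
  exact nonneg_of_mul_nonneg_right (ha.trans this) (Real.exp_pos _)

lemma dotProduct_mulVec_self_eq_zero {ι : Type*} [Fintype ι] {M : Matrix ι ι ℝ}
    (hM : ∀ i j, M j i = -M i j) (p : ι → ℝ) : p ⬝ᵥ M *ᵥ p = 0 := by
  have h : p ⬝ᵥ M *ᵥ p = ∑ i, ∑ j, p i * M i j * p j := by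
    simp only [dotProduct, Matrix.mulVec, Finset.mul_sum, mul_assoc]
  have hneg : ∑ i, ∑ j, p i * M i j * p j = -∑ i, ∑ j, p i * M i j * p j := by
    conv_lhs => rw [Finset.sum_comm]
    simp only [← Finset.sum_neg_distrib]
    exact Finset.sum_congr rfl fun i _ => Finset.sum_congr rfl fun j _ => by rw [hM i j]; ring
  linarith

variable {d : ℕ} {Mt : Matrix (Fin d) (Fin d) ℝ} {r : ℝ}

lemma contDiff_fvec {n : WithTop ℕ∞} : ContDiff ℝ n (fvec d Mt r) := by
  refine contDiff_pi.2 fun i => ?_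
  simp only [fvec, Matrix.mulVec, dotProduct]
  fun_prop

lemma fvec_apply_eq_mul_add (p : Fin d → ℝ) (i : Fin d) :
    fvec d Mt r p i = (2 * (1 - r) * (Mt *ᵥ p) i - r) * p i + r / d := by
  simp only [fvec]; ring

lemma sum_fvec (hd : d ≠ 0) (hskew : ∀ i j, Mt j i = -Mt i j) (p : Fin d → ℝ) :
    ∑ i, fvec d Mt r p i = r * (1 - ∑ i, p i) := by
  have hquad : ∑ i, p i * (Mt *ᵥ p) i = 0 := dotProduct_mulVec_self_eq_zero hskew p
  simp only [fvec, Finset.sum_add_distrib, Finset.sum_sub_distrib, ← Finset.mul_sum,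
    Finset.sum_const, Finset.card_univ, Fintype.card_fin, nsmul_eq_mul]
  simp only [mul_assoc, ← Finset.mul_sum, hquad]
  field_simp
  ring

lemma unitSimplex_subset_closedBall : unitSimplex d ⊆ closedBall 0 1 := by
  intro x hx
  rw [mem_closedBall_zero_iff, pi_norm_le_iff_of_nonneg zero_le_one]
  intro i
  rw [Real.norm_eq_abs, abs_of_nonneg (hx.1 i), ← hx.2]
  exact Finset.single_le_sum (fun j _ => hx.1 j) (Finset.mem_univ i)

/-- `∑ i, g t i - 1` solves `s' = -r s`, and each coordinate solves a linear equation
`u' = c(t) u + r / d` with a nonnegative source. -/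
theorem mem_unitSimplex_of_hasDerivWithinAt_fvec (hd : d ≠ 0) (hskew : ∀ i j, Mt j i = -Mt i j)
    (hr : 0 ≤ r) {g : ℝ → Fin d → ℝ} {a b : ℝ}
    (hg : ∀ t ∈ Icc a b, HasDerivWithinAt g (fvec d Mt r (g t)) (Icc a b) t)
    (ha : g a ∈ unitSimplex d) : ∀ t ∈ Icc a b, g t ∈ unitSimplex d := by
  have hgc : ContinuousOn g (Icc a b) := fun t ht => (hg t ht).continuousWithinAt
  have hcoord : ∀ i, ∀ t ∈ Icc a b,
      HasDerivWithinAt (g · i) (fvec d Mt r (g t) i) (Icc a b) t := fun i t ht =>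
    hasDerivWithinAt_pi.1 (hg t ht) i
  have hnonneg : ∀ i, ∀ t ∈ Icc a b, 0 ≤ g t i := fun i =>
    nonneg_of_hasDerivWithinAt_mul_add (c := fun t => 2 * (1 - r) * (Mt *ᵥ g t) i - r)
      (q := fun _ => r / d)
      (by fun_prop) (fun _ _ => by positivity)
      (fun t ht => by simpa only [fvec_apply_eq_mul_add] using hcoord i t ht) (ha.1 i)
  have hs : ∀ t ∈ Icc a b, HasDerivWithinAt (fun τ => ∑ i, g τ i - 1)
      (-r * (∑ i, g t i - 1) + 0) (Icc a b) t := fun t ht =>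
    ((HasDerivWithinAt.fun_sum fun i _ => hcoord i t ht).sub_const 1).congr_deriv
      (by rw [sum_fvec hd hskew]; ring)
  have hs' : ∀ t ∈ Icc a b, HasDerivWithinAt (fun τ => -(∑ i, g τ i - 1))
      (-r * -(∑ i, g t i - 1) + 0) (Icc a b) t := fun t ht =>
    (hs t ht).neg.congr_deriv (by ring)
  intro t ht
  have hle := nonneg_of_hasDerivWithinAt_mul_add continuousOn_const (fun _ _ => le_rfl) hs
    (by simp [ha.2]) t ht
  have hge := nonneg_of_hasDerivWithinAt_mul_add continuousOn_const (fun _ _ => le_rfl) hs'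
    (by simp [ha.2]) t ht
  exact ⟨fun i => hnonneg i t ht, by linarith⟩

theorem stmt3_general (d : ℕ) (hd : 1 ≤ d) (Mt : Matrix (Fin d) (Fin d) ℝ)
    (hskew : ∀ i j, Mt j i = - Mt i j)
    (r : ℝ) (hr0 : 0 ≤ r)
    (p₀ : Fin d → ℝ) (hp₀ : p₀ ∈ unitSimplex d) :
    ∃ y : ℝ → Fin d → ℝ,
      y 0 = p₀ ∧
      (∀ t ∈ Ici (0 : ℝ), HasDerivWithinAt y (fvec d Mt r (y t)) (Ici 0) t) ∧
      (∀ t ∈ Ici (0 : ℝ), y t ∈ unitSimplex d) ∧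
      (∀ z : ℝ → Fin d → ℝ, z 0 = p₀ →
        (∀ t ∈ Ici (0 : ℝ), HasDerivWithinAt z (fvec d Mt r (z t)) (Ici 0) t) →
        ∀ t ∈ Ici (0 : ℝ), z t = y t) := by
  have hd₀ : d ≠ 0 := by omega
  have hf : ContDiff ℝ 1 (fvec d Mt r) := contDiff_fvec
  obtain ⟨ε, hε, hloc⟩ := hf.exists_pos_forall_mem_closedBall_exists_hasDerivWithinAt 0 1
  have hloc' : ∀ t₀, ∀ x ∈ unitSimplex d, ∃ α : ℝ → Fin d → ℝ, α t₀ = x ∧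
      ∀ t ∈ Icc t₀ (t₀ + ε), HasDerivWithinAt α (fvec d Mt r (α t)) (Icc t₀ (t₀ + ε)) t ∧
        α t ∈ unitSimplex d := by
    intro t₀ x hx
    obtain ⟨α, hα₀, hα⟩ := hloc t₀ x (by exact_mod_cast unitSimplex_subset_closedBall hx)
    exact ⟨α, hα₀, fun t ht => ⟨hα t ht,
      mem_unitSimplex_of_hasDerivWithinAt_fvec hd₀ hskew hr0 hα (hα₀ ▸ hx) t ht⟩⟩
  obtain ⟨y, hy₀, hy⟩ := exists_forall_mem_Ici_hasDerivWithinAt_of_forall_mem_Icc hε hloc' hp₀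
  refine ⟨y, hy₀, fun t ht => (hy t ht).1, fun t ht => (hy t ht).2, fun z hz₀ hz => ?_⟩
  exact hf.eqOn_Ici_of_hasDerivWithinAt hz (fun t ht => (hy t ht).1) (hz₀.trans hy₀.symm)

/-- For every `r ∈ [0,1]` and initial state `p₀ ∈ Δ`, the initial value problem
`y' = f^{(r)}(y)`, `y(0) = p₀` has a unique C¹ solution on `[0,∞)`, and the solution
stays in the simplex. -/
theorem stmt3 (d : ℕ) (hd : 1 ≤ d) (Mt : Matrix (Fin d) (Fin d) ℝ)
    (hskew : ∀ i j, Mt j i = - Mt i j) (hbound : ∀ i j, |Mt i j| ≤ 1)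
    (r : ℝ) (hr0 : 0 ≤ r) (hr1 : r ≤ 1)
    (p₀ : Fin d → ℝ) (hp₀ : p₀ ∈ unitSimplex d) :
    ∃ y : ℝ → Fin d → ℝ,
      y 0 = p₀ ∧
      (∀ t ∈ Ici (0 : ℝ), HasDerivWithinAt y (fvec d Mt r (y t)) (Ici 0) t) ∧
      (∀ t ∈ Ici (0 : ℝ), y t ∈ unitSimplex d) ∧
      (∀ z : ℝ → Fin d → ℝ, z 0 = p₀ →
        (∀ t ∈ Ici (0 : ℝ), HasDerivWithinAt z (fvec d Mt r (z t)) (Ici 0) t) →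
        ∀ t ∈ Ici (0 : ℝ), z t = y t) :=
  stmt3_general d hd Mt hskew r hr0 p₀ hp₀
end

section
/- Let r ∈ (0,1]. Then for every initial state p₀ ∈ Δ, every coordinate i ∈ [d], and every t ≥ 1, the solution of the replicator-mutation differential equation satisfies y^{(r)}_i(t,p₀) ≥ r/(4d). -/
open Finset Set

/-!
Mutation pushes every coordinate towards `1/d` at rate `r`, while the replicator term can pull
a coordinate `p i` down at rate at most `2 p i`, since `|(M̃ p) i| ≤ 1` on the simplex.  Hence
`f_i(p) ≥ r/d - 2 p i > r/(4d)` whenever `p i ≤ r/(4d)`.  A fencing argument then shows that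
`y i` stays above the ramp `s ↦ r s/(4d)` on `[0, 1]` and above the constant `r/(4d)` afterwards.
-/

lemma abs_mulVec_apply_le_one_of_mem_unitSimplex {d : ℕ} {M : Matrix (Fin d) (Fin d) ℝ}
    (hM : ∀ i j, |M i j| ≤ 1) {p : Fin d → ℝ} (hp : p ∈ unitSimplex d) (i : Fin d) :
    |M.mulVec p i| ≤ 1 :=
  calc |∑ j, M i j * p j| ≤ ∑ j, |M i j * p j| := abs_sum_le_sum_abs _ _
    _ ≤ ∑ j, p j := by
        refine sum_le_sum fun j _ => ?_
        rw [abs_mul, abs_of_nonneg (hp.1 j)]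
        exact mul_le_of_le_one_left (hp.1 j) (hM i j)
    _ = 1 := hp.2

lemma sub_le_fvec_apply {d : ℕ} {M : Matrix (Fin d) (Fin d) ℝ} (hM : ∀ i j, |M i j| ≤ 1)
    {r : ℝ} (hr1 : r ≤ 1) {p : Fin d → ℝ} (hp : p ∈ unitSimplex d) (i : Fin d) :
    r / d - (2 - r) * p i ≤ fvec d M r p i := by
  have hMp : -1 ≤ M.mulVec p i := (abs_le.1 (abs_mulVec_apply_le_one_of_mem_unitSimplex hM hp i)).1
  have hrep : -(2 * (1 - r) * p i) ≤ 2 * (1 - r) * p i * M.mulVec p i := by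
    nlinarith [mul_nonneg (hp.1 i) (sub_nonneg.2 hr1)]
  simp only [fvec, mul_sub, mul_one_div]
  linarith

lemma lt_fvec_apply_of_le {d : ℕ} {M : Matrix (Fin d) (Fin d) ℝ} (hM : ∀ i j, |M i j| ≤ 1)
    {r : ℝ} (hr0 : 0 < r) (hr1 : r ≤ 1) {p : Fin d → ℝ} (hp : p ∈ unitSimplex d) (i : Fin d)
    (hpi : p i ≤ r / (4 * d)) : r / (4 * d) < fvec d M r p i := by
  have hd : (0 : ℝ) < d := Nat.cast_pos.2 i.pos
  have hc : r / (4 * d) = r / d / 4 := by ring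
  have hrd : 0 < r / d := div_pos hr0 hd
  nlinarith [sub_le_fvec_apply hM hr1 hp i, hp.1 i]

lemma affine_le_of_hasDerivWithinAt_Ici {u u' : ℝ → ℝ} {a b α k : ℝ}
    (hu : ContinuousOn u (Icc a b)) (hu' : ∀ x ∈ Ico a b, HasDerivWithinAt u (u' x) (Ici x) x)
    (ha : α + k * a ≤ u a) (hcross : ∀ x ∈ Ico a b, u x = α + k * x → k < u' x) :
    ∀ x ∈ Icc a b, α + k * x ≤ u x := by
  have hline : ∀ x, HasDerivAt (fun x => -(α + k * x)) (-k) x := fun x =>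
    (((hasDerivAt_id x).const_mul k).const_add α).neg.congr_deriv (by simp)
  intro x hx
  have := image_le_of_deriv_right_lt_deriv_boundary (f := fun x => -u x)
    (B := fun x => -(α + k * x)) hu.neg (fun x hx => (hu' x hx).neg) (neg_le_neg ha) hline
    (fun x hx hx' => neg_lt_neg (hcross x hx (neg_inj.1 hx'))) hx
  exact neg_le_neg_iff.1 this

theorem stmt5_general (d : ℕ) (Mt : Matrix (Fin d) (Fin d) ℝ)
    (hbound : ∀ i j, |Mt i j| ≤ 1)
    (r : ℝ) (hr0 : 0 < r) (hr1 : r ≤ 1)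
    (y : ℝ → Fin d → ℝ)
    (hyΔ : ∀ t ∈ Ici (0 : ℝ), y t ∈ unitSimplex d)
    (hyD : ∀ t ∈ Ici (0 : ℝ), HasDerivWithinAt y (fvec d Mt r (y t)) (Ici 0) t) :
    ∀ t : ℝ, 1 ≤ t → ∀ i, r / (4 * (d : ℝ)) ≤ y t i := by
  intro t ht i
  set c := r / (4 * (d : ℝ))
  have hc : 0 < c := by have : (0 : ℝ) < d := Nat.cast_pos.2 i.pos; positivity
  have hderiv : ∀ x ∈ Ici (0 : ℝ),
      HasDerivWithinAt (fun s => y s i) (fvec d Mt r (y x) i) (Ici x) x := fun x hx =>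
    hasDerivWithinAt_pi.1 ((hyD x hx).mono (Ici_subset_Ici.2 hx)) i
  have hy : ContinuousOn y (Ici 0) := fun s hs => (hyD s hs).continuousWithinAt
  have hcont : ∀ a b, 0 ≤ a → ContinuousOn (fun s => y s i) (Icc a b) := fun a b ha =>
    (continuous_apply i).comp_continuousOn (hy.mono fun s hs => ha.trans hs.1)
  have hcross : ∀ x ∈ Ici (0 : ℝ), y x i ≤ c → c < fvec d Mt r (y x) i := fun x hx =>
    lt_fvec_apply_of_le hbound hr0 hr1 (hyΔ x hx) i
  have hramp : 0 + c * 1 ≤ y 1 i :=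
    affine_le_of_hasDerivWithinAt_Ici (hcont 0 1 le_rfl) (fun x hx => hderiv x hx.1)
      (by simpa using (hyΔ 0 self_mem_Ici).1 i)
      (fun x hx hx' => hcross x hx.1 (hx' ▸ by simpa using mul_le_of_le_one_right hc.le hx.2.le))
      1 ⟨zero_le_one, le_rfl⟩
  simpa using affine_le_of_hasDerivWithinAt_Ici (k := 0) (hcont 1 t zero_le_one)
    (fun x hx => hderiv x (zero_le_one.trans hx.1)) (by simpa using hramp)
    (fun x hx hx' => hc.trans (hcross x (zero_le_one.trans hx.1) (by simp [hx'])))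
    t ⟨ht, le_rfl⟩

/-- For `r ∈ (0,1]`, every solution of the replicator-mutation ODE satisfies
`y_i(t) ≥ r/(4d)` for all `t ≥ 1` and every coordinate `i`. -/
theorem stmt5 (d : ℕ) (hd : 1 ≤ d) (Mt : Matrix (Fin d) (Fin d) ℝ)
    (hskew : ∀ i j, Mt j i = - Mt i j) (hbound : ∀ i j, |Mt i j| ≤ 1)
    (r : ℝ) (hr0 : 0 < r) (hr1 : r ≤ 1)
    (p₀ : Fin d → ℝ) (hp₀ : p₀ ∈ unitSimplex d)
    (y : ℝ → Fin d → ℝ) (hy0 : y 0 = p₀)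
    (hyΔ : ∀ t ∈ Ici (0 : ℝ), y t ∈ unitSimplex d)
    (hyD : ∀ t ∈ Ici (0 : ℝ), HasDerivWithinAt y (fvec d Mt r (y t)) (Ici 0) t) :
    ∀ t : ℝ, 1 ≤ t → ∀ i, r / (4 * (d : ℝ)) ≤ y t i :=
  stmt5_general d Mt hbound r hr0 hr1 y hyΔ hyD
end

section
/- Let {X(n) : n ∈ ℕ} be an irreducible time-homogeneous Markov chain with finite state space S and stationary distribution π. Then for every subset S' ⊆ S and every ε > 0, there exists C > 0 such that for all sufficiently large n, P(|s_n(S') − π(S')| ≤ ε) ≥ 1 − e^{−Cn}. -/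
/-!
Let `f = 1_{S'}` and `c = π(S')`. Irreducibility makes every `P`-harmonic function constant, so
the range of `I - P` has codimension one and is contained in the kernel of `v ↦ π ⬝ᵥ v`; hence the
Poisson equation `g - P g = f - c` has a solution `g`. Along a trajectory this writes
`n (s_n(S') - c)` as a sum of the bounded increments `D(X k, X (k+1)) = g(X (k+1)) - (P g)(X k)`,
which have mean zero under every row of `P`, plus a boundary term bounded independently of `n`.
Applying Hoeffding's lemma one transition at a time under the Markov property gives the
Azuma–Hoeffding bound `exp (-a² / (2 n B²))` for each tail of the increment sum, which is
exponentially small in `n` for `a = n ε / 2`.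
-/

open Finset Filter MeasureTheory

section ExponentialBounds

open Real

lemma exp_mul_le_cosh_add_div_mul_sinh (t : ℝ) {x B : ℝ} (hB : 0 < B) (hx : |x| ≤ B) :
    exp (t * x) ≤ cosh (t * B) + x / B * sinh (t * B) := by
  obtain ⟨hxl, hxu⟩ := abs_le.mp hx
  have hsum : (B - x) / (2 * B) + (B + x) / (2 * B) = 1 := by field_simp; ring
  have hconvex := convexOn_exp.2 (Set.mem_univ (-(t * B))) (Set.mem_univ (t * B))
    (div_nonneg (by linarith) (by linarith)) (div_nonneg (by linarith) (by linarith)) hsum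
  calc exp (t * x) = exp ((B - x) / (2 * B) * -(t * B) + (B + x) / (2 * B) * (t * B)) := by
        congr 1; field_simp; ring
    _ ≤ (B - x) / (2 * B) * exp (-(t * B)) + (B + x) / (2 * B) * exp (t * B) := hconvex
    _ = cosh (t * B) + x / B * sinh (t * B) := by rw [cosh_eq, sinh_eq]; field_simp; ring

lemma sum_mul_exp_le_exp_sq {ι : Type*} [Fintype ι] {w D : ι → ℝ} (t : ℝ) {B : ℝ} (hB : 0 < B)
    (hw0 : ∀ i, 0 ≤ w i) (hw1 : ∑ i, w i = 1) (hmean : ∑ i, w i * D i = 0)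
    (hD : ∀ i, |D i| ≤ B) :
    ∑ i, w i * exp (t * D i) ≤ exp ((t * B) ^ 2 / 2) :=
  calc ∑ i, w i * exp (t * D i)
      ≤ ∑ i, (w i * cosh (t * B) + w i * D i * (sinh (t * B) / B)) :=
        sum_le_sum fun i _ => by
          have := mul_le_mul_of_nonneg_left
            (exp_mul_le_cosh_add_div_mul_sinh t hB (hD i)) (hw0 i)
          linarith [show w i * (D i / B * sinh (t * B)) = w i * D i * (sinh (t * B) / B) by ring]
    _ = cosh (t * B) := by rw [sum_add_distrib, ← sum_mul, ← sum_mul, hw1, hmean]; ring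
    _ ≤ exp ((t * B) ^ 2 / 2) := cosh_le_exp_half_sq _

lemma measureReal_le_exp_mul_sum_exp {Ω α : Type*} [MeasurableSpace Ω] [Fintype α]
    (μ : Measure Ω) [IsFiniteMeasure μ] (Y : Ω → α) (F : α → ℝ) {t : ℝ} (ht : 0 ≤ t) (a : ℝ) :
    μ.real {ω | a ≤ F (Y ω)} ≤ exp (-(t * a)) * ∑ x, μ.real (Y ⁻¹' {x}) * exp (t * F x) := by
  classical
  calc μ.real {ω | a ≤ F (Y ω)} = μ.real (⋃ x ∈ univ.filter (a ≤ F ·), Y ⁻¹' {x}) := by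
        congr 1; ext ω; simp
    _ ≤ ∑ x ∈ univ.filter (a ≤ F ·), μ.real (Y ⁻¹' {x}) := measureReal_biUnion_finset_le _ _
    _ ≤ ∑ x ∈ univ.filter (a ≤ F ·), μ.real (Y ⁻¹' {x}) * exp (t * (F x - a)) :=
        sum_le_sum fun x hx => le_mul_of_one_le_right measureReal_nonneg <|
          one_le_exp <| mul_nonneg ht <| sub_nonneg.2 (mem_filter.1 hx).2
    _ ≤ ∑ x, μ.real (Y ⁻¹' {x}) * exp (t * (F x - a)) :=
        sum_le_sum_of_subset_of_nonneg (filter_subset _ _) fun _ _ _ => by positivity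
    _ = exp (-(t * a)) * ∑ x, μ.real (Y ⁻¹' {x}) * exp (t * F x) := by
        rw [mul_sum]
        refine sum_congr rfl fun x _ => ?_
        rw [show t * (F x - a) = -(t * a) + t * F x by ring, exp_add]
        ring

lemma two_mul_exp_neg_le_exp_neg_half {x : ℝ} (hx : 2 * log 2 ≤ x) :
    2 * exp (-x) ≤ exp (-(x / 2)) := by
  calc 2 * exp (-x) = exp (log 2 - x) := by rw [exp_sub, exp_log two_pos, exp_neg, div_eq_mul_inv]
    _ ≤ exp (-(x / 2)) := exp_le_exp.2 (by linarith)

end ExponentialBounds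

section Poisson

open Matrix

variable {S : Type*} [Fintype S] [DecidableEq S] {P : Matrix S S ℝ}

lemma eq_of_mulVec_eq_self (hP : P ∈ rowStochastic ℝ S)
    (hirr : ∀ p q, ∃ n, 0 < (P ^ n) p q) {g : S → ℝ} (hg : P *ᵥ g = g) (p q : S) :
    g p = g q := by
  have : Nonempty S := ⟨p⟩
  have hpow (n : ℕ) : (P ^ n) *ᵥ g = g := by
    induction n with
    | zero => simp
    | succ n ih => rw [pow_succ, ← mulVec_mulVec, hg, ih]
  obtain ⟨r, hr⟩ := Finite.exists_max g
  -- `g r` is an average of `g` over the `n`-step transition from `r`, which charges `q`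
  have hconst (q : S) : g q = g r := by
    obtain ⟨n, hn⟩ := hirr r q
    have hPn := pow_mem hP n
    by_contra hne
    have hlt : ∑ s, (P ^ n) r s * g s < ∑ s, (P ^ n) r s * g r :=
      sum_lt_sum (fun s _ => mul_le_mul_of_nonneg_left (hr s) (hPn.1 r s))
        ⟨q, mem_univ q, mul_lt_mul_of_pos_left (lt_of_le_of_ne (hr q) hne) hn⟩
    rw [← sum_mul, sum_row_of_mem_rowStochastic hPn, one_mul] at hlt
    exact hlt.ne (congrFun (hpow n) r)
  rw [hconst p, hconst q]

open Module LinearMap in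
lemma exists_sub_mulVec_eq (hP : P ∈ rowStochastic ℝ S) (hirr : ∀ p q, ∃ n, 0 < (P ^ n) p q)
    {π : S → ℝ} (hπ1 : ∑ p, π p = 1) (hπ : π ᵥ* P = π) (f : S → ℝ) :
    ∃ g : S → ℝ, g - P *ᵥ g = f - Function.const S (π ⬝ᵥ f) := by
  obtain ⟨p₀⟩ : Nonempty S := by
    by_contra h
    simp [not_nonempty_iff.1 h] at hπ1
  let L := toLin' (1 - P)
  let φ := dotProductBilin ℝ ℝ π
  have hL (g : S → ℝ) : L g = g - P *ᵥ g := by simp [L]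
  have hφ (v : S → ℝ) : φ v = π ⬝ᵥ v := rfl
  have hφ1 : φ (Function.const S 1) = 1 := by simpa [hφ, dotProduct] using hπ1
  have hker_le : ker L ≤ Submodule.span ℝ {Function.const S (1 : ℝ)} := fun g hg => by
    rw [LinearMap.mem_ker, hL, sub_eq_zero] at hg
    refine Submodule.mem_span_singleton.2 ⟨g p₀, funext fun p => ?_⟩
    simp [eq_of_mulVec_eq_self hP hirr hg.symm p p₀]
  have hker : finrank ℝ (ker L) ≤ 1 :=
    (Submodule.finrank_mono hker_le).trans_eq
      (finrank_span_singleton fun h => by simpa using congrFun h p₀)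
  have hrange : range L ≤ ker φ := by
    rintro _ ⟨g, rfl⟩
    rw [LinearMap.mem_ker, hL, hφ, dotProduct_sub, dotProduct_mulVec, hπ, sub_self]
  have hφrange : range φ = ⊤ :=
    eq_top_iff.2 fun c _ => ⟨c • Function.const S 1, by rw [map_smul, hφ1, smul_eq_mul, mul_one]⟩
  have heq : range L = ker φ := by
    refine Submodule.eq_of_le_of_finrank_le hrange ?_
    have hL' := L.finrank_range_add_finrank_ker
    have hφ' := φ.finrank_range_add_finrank_ker
    rw [hφrange, finrank_top, finrank_self] at hφ'
    omega
  have hmem : f - Function.const S (π ⬝ᵥ f) ∈ range L := by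
    rw [heq, LinearMap.mem_ker, hφ, dotProduct_sub]
    simp [dotProduct, ← sum_mul, hπ1]
  obtain ⟨g, hg⟩ := hmem
  exact ⟨g, by rw [← hL, hg]⟩

lemma abs_mulVec_le_norm (hP : P ∈ rowStochastic ℝ S) (g : S → ℝ) (p : S) :
    |(P *ᵥ g) p| ≤ ‖g‖ :=
  calc |(P *ᵥ g) p| ≤ ∑ q, |P p q * g q| := abs_sum_le_sum_abs _ _
    _ ≤ ∑ q, P p q * ‖g‖ := sum_le_sum fun q _ => by
        rw [abs_mul, abs_of_nonneg (hP.1 p q)]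
        exact mul_le_mul_of_nonneg_left (norm_le_pi_norm g q) (hP.1 p q)
    _ = ‖g‖ := by rw [← sum_mul, sum_row_of_mem_rowStochastic hP, one_mul]

lemma sum_mul_sub_mulVec_eq_zero (hP : P ∈ rowStochastic ℝ S) (g : S → ℝ) (u : S) :
    ∑ v, P u v * (g v - (P *ᵥ g) u) = 0 := by
  simp [mul_sub, ← sum_mul, sum_row_of_mem_rowStochastic hP, mulVec, dotProduct]

lemma abs_sub_mulVec_le (hP : P ∈ rowStochastic ℝ S) (g : S → ℝ) (u v : S) :
    |g v - (P *ᵥ g) u| ≤ 2 * ‖g‖ := by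
  linarith [abs_sub (g v) ((P *ᵥ g) u), norm_le_pi_norm g v, abs_mulVec_le_norm hP g u,
    Real.norm_eq_abs (g v)]

end Poisson

lemma sum_Icc_sub_eq_sum_range_add {S : Type*} {f g h : S → ℝ} {c : ℝ}
    (hfgh : ∀ p, g p - h p = f p - c) (x : ℕ → S) (n : ℕ) :
    ∑ k ∈ Icc 1 n, f (x k) - n * c
      = ∑ k ∈ range n, (g (x (k + 1)) - h (x k)) + (h (x 0) - h (x n)) := by
  induction n with
  | zero => simp
  | succ n ih =>
    rw [sum_Icc_succ_top (by omega), sum_range_succ]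
    push_cast
    linarith [hfgh (x (n + 1))]

lemma abs_one_div_mul_sum_Icc_sub_le {S : Type*} {f g h : S → ℝ} {c K : ℝ}
    (hfgh : ∀ p, g p - h p = f p - c) (hh : ∀ p, |h p| ≤ K) (x : ℕ → S) {n : ℕ} (hn : 0 < n) :
    |1 / (n : ℝ) * ∑ k ∈ Icc 1 n, f (x k) - c|
      ≤ (|∑ k ∈ range n, (g (x (k + 1)) - h (x k))| + 2 * K) / n := by
  have hn' : (0 : ℝ) < n := Nat.cast_pos.2 hn
  rw [show 1 / (n : ℝ) * ∑ k ∈ Icc 1 n, f (x k) - c = (∑ k ∈ Icc 1 n, f (x k) - n * c) / n by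
      field_simp, abs_div, abs_of_pos hn', sum_Icc_sub_eq_sum_range_add hfgh]
  gcongr
  linarith [abs_add_le (∑ k ∈ range n, (g (x (k + 1)) - h (x k))) (h (x 0) - h (x n)),
    abs_sub (h (x 0)) (h (x n)), hh (x 0), hh (x n)]

section MarkovChain

open Matrix

variable {S Ω : Type*}

def IsMarkovChain [MeasurableSpace Ω] (μ : Measure Ω) (X : ℕ → Ω → S) (P : Matrix S S ℝ) :
    Prop :=
  ∀ (n : ℕ) (path : ℕ → S), μ {ω | ∀ k ≤ n + 1, X k ω = path k}
    = ENNReal.ofReal (P (path n) (path (n + 1))) * μ {ω | ∀ k ≤ n, X k ω = path k}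

def trajectory (X : ℕ → Ω → S) (n : ℕ) (ω : Ω) : Fin (n + 1) → S := fun k => X k ω

def pathSum (D : S → S → ℝ) {n : ℕ} (p : Fin (n + 1) → S) : ℝ :=
  ∑ k : Fin n, D (p k.castSucc) (p k.succ)

lemma pathSum_snoc (D : S → S → ℝ) {n : ℕ} (q : Fin (n + 1) → S) (s : S) :
    pathSum D (Fin.snoc q s : Fin (n + 2) → S) = pathSum D q + D (q (Fin.last n)) s := by
  simp only [pathSum, Fin.sum_univ_castSucc, Fin.succ_castSucc, Fin.snoc_castSucc, Fin.snoc_last,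
    Fin.succ_last]

lemma pathSum_trajectory (D : S → S → ℝ) (X : ℕ → Ω → S) (n : ℕ) (ω : Ω) :
    pathSum D (trajectory X n ω) = ∑ k ∈ range n, D (X k ω) (X (k + 1) ω) :=
  Fin.sum_univ_eq_sum_range (fun k => D (X k ω) (X (k + 1) ω)) n

lemma trajectory_preimage_singleton {X : ℕ → Ω → S} {n : ℕ} {p : Fin (n + 1) → S}
    {path : ℕ → S} (h : ∀ k : Fin (n + 1), p k = path k) :
    trajectory X n ⁻¹' {p} = {ω | ∀ k ≤ n, X k ω = path k} := by
  ext ω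
  simp [trajectory, funext_iff, Fin.forall_iff, h]

variable [MeasurableSpace Ω] {μ : Measure Ω} {X : ℕ → Ω → S} {P : Matrix S S ℝ}

lemma IsMarkovChain.measure_trajectory_snoc (hX : IsMarkovChain μ X P) {n : ℕ}
    (q : Fin (n + 1) → S) (s : S) :
    μ (trajectory X (n + 1) ⁻¹' {Fin.snoc q s}) =
      ENNReal.ofReal (P (q (Fin.last n)) s) * μ (trajectory X n ⁻¹' {q}) := by
  let path : ℕ → S := fun k => if h : k < n + 2 then (Fin.snoc q s : Fin (n + 2) → S) ⟨k, h⟩ else s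
  have hq (k : Fin (n + 1)) : q k = path k := by
    simp [path, Fin.snoc, k.is_le, show (k : ℕ) < n + 2 by omega]
  have hlast : path n = q (Fin.last n) := (hq (Fin.last n)).symm
  have hs : path (n + 1) = s := by simp [path, Fin.snoc]
  rw [trajectory_preimage_singleton (path := path) fun k => by simp [path],
    trajectory_preimage_singleton hq, hX n path, hlast, hs]

lemma sum_measureReal_trajectory [MeasurableSpace S] [MeasurableSingletonClass S] [Fintype S]
    [IsProbabilityMeasure μ] (hXm : ∀ k, Measurable (X k)) (n : ℕ) :
    ∑ p : Fin (n + 1) → S, μ.real (trajectory X n ⁻¹' {p}) = 1 := by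
  have hmeas : Measurable (trajectory X n) := measurable_pi_lambda _ fun k => hXm k
  rw [sum_measureReal_preimage_singleton univ fun p _ => hmeas (measurableSet_singleton p)]
  simp

variable [Fintype S] [DecidableEq S] [MeasurableSpace S] [MeasurableSingletonClass S]
  [IsProbabilityMeasure μ]

lemma IsMarkovChain.sum_measureReal_mul_exp_pathSum_le (hX : IsMarkovChain μ X P)
    (hXm : ∀ k, Measurable (X k)) (hP : P ∈ rowStochastic ℝ S) {D : S → S → ℝ} {B : ℝ}
    (hB : 0 < B) (hmean : ∀ u, ∑ v, P u v * D u v = 0) (hD : ∀ u v, |D u v| ≤ B) (t : ℝ)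
    (n : ℕ) :
    ∑ p : Fin (n + 1) → S, μ.real (trajectory X n ⁻¹' {p}) * Real.exp (t * pathSum D p)
      ≤ Real.exp (n * ((t * B) ^ 2 / 2)) := by
  induction n with
  | zero => simp [pathSum, sum_measureReal_trajectory hXm]
  | succ n ih =>
    have hstep (q : Fin (n + 1) → S) (s : S) :
        μ.real (trajectory X (n + 1) ⁻¹' {Fin.snoc q s}) *
            Real.exp (t * pathSum D (Fin.snoc q s : Fin (n + 2) → S))
          = μ.real (trajectory X n ⁻¹' {q}) * Real.exp (t * pathSum D q) *
            (P (q (Fin.last n)) s * Real.exp (t * D (q (Fin.last n)) s)) := by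
      rw [measureReal_def, hX.measure_trajectory_snoc, ENNReal.toReal_mul,
        ENNReal.toReal_ofReal (hP.1 _ _), ← measureReal_def, pathSum_snoc, mul_add, Real.exp_add]
      ring
    calc ∑ p : Fin (n + 2) → S, μ.real (trajectory X (n + 1) ⁻¹' {p}) * Real.exp (t * pathSum D p)
        = ∑ q : Fin (n + 1) → S, μ.real (trajectory X n ⁻¹' {q}) * Real.exp (t * pathSum D q) *
            ∑ s, P (q (Fin.last n)) s * Real.exp (t * D (q (Fin.last n)) s) := by
          rw [← (Fin.snocEquiv fun _ => S).sum_comp, Fintype.sum_prod_type, sum_comm]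
          simp only [mul_sum]
          exact sum_congr rfl fun q _ => sum_congr rfl fun s _ => hstep q s
      _ ≤ ∑ q : Fin (n + 1) → S, μ.real (trajectory X n ⁻¹' {q}) * Real.exp (t * pathSum D q) *
            Real.exp ((t * B) ^ 2 / 2) :=
          sum_le_sum fun q _ => mul_le_mul_of_nonneg_left
            (sum_mul_exp_le_exp_sq t hB (hP.1 _) (sum_row_of_mem_rowStochastic hP _) (hmean _)
              (hD _))
            (by positivity)
      _ ≤ Real.exp (n * ((t * B) ^ 2 / 2)) * Real.exp ((t * B) ^ 2 / 2) := by
          rw [← sum_mul]; gcongr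
      _ = Real.exp ((n + 1 : ℕ) * ((t * B) ^ 2 / 2)) := by
          rw [← Real.exp_add]; push_cast; ring_nf

theorem IsMarkovChain.measureReal_sum_ge_le (hX : IsMarkovChain μ X P)
    (hXm : ∀ k, Measurable (X k)) (hP : P ∈ rowStochastic ℝ S) {D : S → S → ℝ} {B : ℝ}
    (hB : 0 < B) (hmean : ∀ u, ∑ v, P u v * D u v = 0) (hD : ∀ u v, |D u v| ≤ B) (n : ℕ)
    {a : ℝ} (ha : 0 ≤ a) :
    μ.real {ω | a ≤ ∑ k ∈ range n, D (X k ω) (X (k + 1) ω)}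
      ≤ Real.exp (-a ^ 2 / (2 * n * B ^ 2)) := by
  -- `t` minimises the Chernoff exponent `-t a + n (t B)² / 2`
  set t := a / (n * B ^ 2)
  have ht : 0 ≤ t := by positivity
  simp_rw [← pathSum_trajectory]
  refine (measureReal_le_exp_mul_sum_exp μ (trajectory X n) (pathSum D) ht a).trans ?_
  refine (mul_le_mul_of_nonneg_left (hX.sum_measureReal_mul_exp_pathSum_le hXm hP hB hmean hD t n)
    (by positivity)).trans_eq ?_
  rw [← Real.exp_add]
  congr 1
  rcases n.eq_zero_or_pos with rfl | hn
  · simp [t]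
  · simp only [t]; field_simp; ring

theorem IsMarkovChain.one_sub_two_mul_exp_le_measureReal (hX : IsMarkovChain μ X P)
    (hXm : ∀ k, Measurable (X k)) (hP : P ∈ rowStochastic ℝ S) {D : S → S → ℝ} {B : ℝ}
    (hB : 0 < B) (hmean : ∀ u, ∑ v, P u v * D u v = 0) (hD : ∀ u v, |D u v| ≤ B) (n : ℕ)
    {a : ℝ} (ha : 0 ≤ a) {E : Set Ω}
    (hE : ∀ ω, |∑ k ∈ range n, D (X k ω) (X (k + 1) ω)| < a → ω ∈ E) :
    1 - 2 * Real.exp (-a ^ 2 / (2 * n * B ^ 2)) ≤ μ.real E := by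
  have hupper := hX.measureReal_sum_ge_le hXm hP hB hmean hD n ha
  have hlower := hX.measureReal_sum_ge_le hXm hP hB (D := fun u v => -D u v)
    (by simpa using hmean) (by simpa using hD) n ha
  have hcompl : Eᶜ ⊆ {ω | a ≤ ∑ k ∈ range n, D (X k ω) (X (k + 1) ω)} ∪
      {ω | a ≤ ∑ k ∈ range n, -D (X k ω) (X (k + 1) ω)} := by
    intro ω hω
    by_contra h
    rw [Set.mem_union, not_or] at h
    have hD_lt : ¬a ≤ ∑ k ∈ range n, D (X k ω) (X (k + 1) ω) := h.1
    have hnegD_lt : ¬a ≤ ∑ k ∈ range n, -D (X k ω) (X (k + 1) ω) := h.2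
    rw [sum_neg_distrib] at hnegD_lt
    exact hω (hE ω (abs_lt.2 ⟨by linarith [not_le.1 hnegD_lt], not_le.1 hD_lt⟩))
  have htails := (measureReal_mono hcompl (measure_ne_top μ _)).trans (measureReal_union_le _ _)
  have hsplit := measureReal_union_le (μ := μ) E Eᶜ
  rw [Set.union_compl_self, probReal_univ] at hsplit
  linarith

end MarkovChain

theorem stmt9_general (S : Type) [Fintype S] [DecidableEq S]
    [MeasurableSpace S] [MeasurableSingletonClass S]
    -- a (row) stochastic transition matrix
    (P : Matrix S S ℝ) (hP0 : ∀ p q, 0 ≤ P p q) (hP1 : ∀ p, ∑ q, P p q = 1)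
    -- irreducibility
    (hirr : ∀ p q : S, ∃ n : ℕ, 1 ≤ n ∧ 0 < (P ^ n) p q)
    -- the stationary distribution
    (π : S → ℝ) (hπ1 : ∑ p, π p = 1)
    (hπstat : ∀ q, ∑ p, π p * P p q = π q)
    -- the Markov chain `X` with transition matrix `P`
    (Ω : Type) [MeasurableSpace Ω] (μ : Measure Ω) [IsProbabilityMeasure μ]
    (X : ℕ → Ω → S) (hXm : ∀ n, Measurable (X n))
    (hMarkov : ∀ (n : ℕ) (path : ℕ → S),
      μ {ω | ∀ k ≤ n + 1, X k ω = path k}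
        = ENNReal.ofReal (P (path n) (path (n + 1))) * μ {ω | ∀ k ≤ n, X k ω = path k})
    (S' : Finset S) (ε : ℝ) (hε : 0 < ε) :
    ∃ C > 0, ∃ n₀ : ℕ, ∀ n ≥ n₀,
      1 - Real.exp (-(C * n)) ≤
        (μ {ω | |(1 / (n : ℝ)) * (∑ k ∈ Finset.Icc 1 n, if X k ω ∈ S' then (1 : ℝ) else 0)
            - ∑ p ∈ S', π p| ≤ ε}).toReal := by
  have hP : P ∈ Matrix.rowStochastic ℝ S := Matrix.mem_rowStochastic_iff_sum.2 ⟨hP0, hP1⟩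
  let f : S → ℝ := fun p => if p ∈ S' then 1 else 0
  have hπf : dotProduct π f = ∑ p ∈ S', π p := by simp [f, dotProduct]
  obtain ⟨g, hg⟩ := exists_sub_mulVec_eq hP (fun p q => (hirr p q).imp fun _ => And.right) hπ1
    (funext hπstat) f
  rw [hπf] at hg
  set B := 2 * ‖g‖ + 1
  have hD (u v : S) : |g v - Matrix.mulVec P g u| ≤ B :=
    (abs_sub_mulVec_le hP g u v).trans (by linarith)
  set κ := ε ^ 2 / (8 * B ^ 2)
  have hκ : 0 < κ := by positivity
  obtain ⟨n₀, hn₀⟩ := eventually_atTop.1 <| (eventually_gt_atTop 0).and <|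
    (tendsto_natCast_atTop_atTop.eventually_ge_atTop (2 * B / ε)).and
      (tendsto_natCast_atTop_atTop.eventually_ge_atTop (2 * Real.log 2 / κ))
  refine ⟨κ / 2, by positivity, n₀, fun n hn => ?_⟩
  obtain ⟨hn, hnB, hnκ⟩ := hn₀ n hn
  have hn' : (0 : ℝ) < n := Nat.cast_pos.2 hn
  rw [div_le_iff₀ hε] at hnB
  rw [div_le_iff₀ hκ] at hnκ
  have hexp : -(n * ε / 2) ^ 2 / (2 * n * B ^ 2) = -(κ * n) := by simp only [κ]; field_simp; ring
  calc 1 - Real.exp (-(κ / 2 * n)) ≤ 1 - 2 * Real.exp (-(n * ε / 2) ^ 2 / (2 * n * B ^ 2)) := by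
        rw [hexp, show κ / 2 * n = κ * n / 2 by ring]
        linarith [two_mul_exp_neg_le_exp_neg_half (x := κ * n) (by linarith)]
    _ ≤ _ := IsMarkovChain.one_sub_two_mul_exp_le_measureReal hMarkov hXm hP
        (by positivity) (sum_mul_sub_mulVec_eq_zero hP g) hD n (by positivity) fun ω hω =>
          (abs_one_div_mul_sum_Icc_sub_le (fun p => congrFun hg p) (abs_mulVec_le_norm hP g)
            (fun k => X k ω) hn).trans <| by rw [div_le_iff₀ hn']; linarith

/-- For an irreducible finite-state time-homogeneous Markov chain with stationary
distribution `π`, the sojourn time `s_n(S')` of any set of states `S'` satisfies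
`P(|s_n(S') − π(S')| ≤ ε) ≥ 1 − e^{−Cn}` for some `C > 0` and all large enough `n`. -/
theorem stmt9 (S : Type) [Fintype S] [DecidableEq S] [Nonempty S]
    [MeasurableSpace S] [MeasurableSingletonClass S]
    -- a (row) stochastic transition matrix
    (P : Matrix S S ℝ) (hP0 : ∀ p q, 0 ≤ P p q) (hP1 : ∀ p, ∑ q, P p q = 1)
    -- irreducibility
    (hirr : ∀ p q : S, ∃ n : ℕ, 1 ≤ n ∧ 0 < (P ^ n) p q)
    -- the stationary distribution
    (π : S → ℝ) (hπ0 : ∀ p, 0 ≤ π p) (hπ1 : ∑ p, π p = 1)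
    (hπstat : ∀ q, ∑ p, π p * P p q = π q)
    -- the Markov chain `X` with transition matrix `P`
    (Ω : Type) [MeasurableSpace Ω] (μ : Measure Ω) [IsProbabilityMeasure μ]
    (X : ℕ → Ω → S) (hXm : ∀ n, Measurable (X n))
    (hMarkov : ∀ (n : ℕ) (path : ℕ → S),
      μ {ω | ∀ k ≤ n + 1, X k ω = path k}
        = ENNReal.ofReal (P (path n) (path (n + 1))) * μ {ω | ∀ k ≤ n, X k ω = path k})
    (S' : Finset S) (ε : ℝ) (hε : 0 < ε) :
    ∃ C > 0, ∃ n₀ : ℕ, ∀ n ≥ n₀,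
      1 - Real.exp (-(C * n)) ≤
        (μ {ω | |(1 / (n : ℝ)) * (∑ k ∈ Finset.Icc 1 n, if X k ω ∈ S' then (1 : ℝ) else 0)
            - ∑ p ∈ S', π p| ≤ ε}).toReal :=
  stmt9_general S P hP0 hP1 hirr π hπ1 hπstat Ω μ X hXm hMarkov S' ε hε
end

section
/- Let α ∈ [0,1] and ε > 0, and for each n ∈ ℕ let B_n be a binomially distributed random variable with parameters n and α. Then Σ_{n≥1} P(B_n > n(α + ε)) < ∞. -/
/-!
Chernoff bound: for every `l ≥ 0`, Markov's inequality applied to `exp (l B_n)` gives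
`P(B_n > t) ≤ exp (-l t) (α eˡ + 1 - α)ⁿ`. With `t = n(α + ε)` this is `rⁿ` for
`r = (α eˡ + 1 - α) e^{-l(α+ε)}`, and since `r = 1 - ε l + O(l²)`, a small `l > 0` makes
`r < 1`, so the series is dominated by a convergent geometric series.
-/

open Finset Real

noncomputable def binomialUpperTail (α : ℝ) (n : ℕ) (t : ℝ) : ℝ :=
  ∑ k ∈ range (n + 1), if t < k then (n.choose k : ℝ) * α ^ k * (1 - α) ^ (n - k) else 0

section Binomial

variable {α : ℝ} (hα0 : 0 ≤ α) (hα1 : α ≤ 1)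
include hα0 hα1

lemma binomialUpperTail_nonneg (n : ℕ) (t : ℝ) : 0 ≤ binomialUpperTail α n t := by
  have : 0 ≤ 1 - α := by linarith
  unfold binomialUpperTail
  exact sum_nonneg fun k _ => by split_ifs <;> positivity

lemma binomialUpperTail_le_exp_mul_mgf {l : ℝ} (hl : 0 ≤ l) (n : ℕ) (t : ℝ) :
    binomialUpperTail α n t ≤ exp (-(l * t)) * (α * exp l + (1 - α)) ^ n := by
  have h1α : 0 ≤ 1 - α := by linarith
  have hterm : ∀ k ∈ range (n + 1),
      (if t < k then (n.choose k : ℝ) * α ^ k * (1 - α) ^ (n - k) else 0) ≤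
        exp (-(l * t)) * ((α * exp l) ^ k * (1 - α) ^ (n - k) * n.choose k) := by
    intro k _
    split_ifs with htk
    · have hexp : 1 ≤ exp (-(l * t)) * exp l ^ k := by
        rw [← exp_nat_mul, ← exp_add, one_le_exp_iff]
        nlinarith
      calc (n.choose k : ℝ) * α ^ k * (1 - α) ^ (n - k)
          ≤ (n.choose k : ℝ) * α ^ k * (1 - α) ^ (n - k) * (exp (-(l * t)) * exp l ^ k) :=
            le_mul_of_one_le_right (by positivity) hexp
        _ = _ := by ring
    · positivity
  calc binomialUpperTail α n t
      ≤ ∑ k ∈ range (n + 1), exp (-(l * t)) * ((α * exp l) ^ k * (1 - α) ^ (n - k) * n.choose k) :=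
        sum_le_sum hterm
    _ = exp (-(l * t)) * (α * exp l + (1 - α)) ^ n := by rw [← mul_sum, add_pow]

lemma exists_pos_binomial_chernoff_rate_lt_one {ε : ℝ} (hε : 0 < ε) :
    ∃ l > 0, (α * exp l + (1 - α)) * exp (-(l * (α + ε))) < 1 := by
  set l := min (ε / 2) 1
  have hl0 : 0 < l := lt_min (by linarith) one_pos
  have hlε : l ≤ ε / 2 := min_le_left _ _
  have hl1 : |l| ≤ 1 := by rw [abs_of_pos hl0]; exact min_le_right _ _
  have hexp : exp l - 1 - l ≤ l ^ 2 := (le_abs_self _).trans (abs_exp_sub_one_sub_id_le hl1)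
  -- `1 + α (eˡ - 1) ≤ exp (α (eˡ - 1))`, and `α (eˡ - 1 - l) ≤ l² < ε l`
  have hmgf : α * exp l + (1 - α) ≤ exp (α * (exp l - 1)) := by
    linarith [add_one_le_exp (α * (exp l - 1))]
  refine ⟨l, hl0, ?_⟩
  calc (α * exp l + (1 - α)) * exp (-(l * (α + ε)))
      ≤ exp (α * (exp l - 1)) * exp (-(l * (α + ε))) := by gcongr
    _ = exp (α * (exp l - 1 - l) - l * ε) := by rw [← exp_add]; ring_nf
    _ < 1 := by
      rw [exp_lt_one_iff]
      nlinarith [mul_le_mul_of_nonneg_left hexp hα0, mul_le_mul_of_nonneg_right hα1 (sq_nonneg l)]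

end Binomial

/-- For binomial random variables `B_n ∼ B(n, α)` and `ε > 0`, the series
`Σ_n P(B_n > n(α + ε))` converges; the probability `P(B_n > n(α+ε))` is written
explicitly as `Σ_{k ≤ n, k > n(α+ε)} C(n,k) α^k (1−α)^{n−k}`. -/
theorem stmt10 (α ε : ℝ) (hα0 : 0 ≤ α) (hα1 : α ≤ 1) (hε : 0 < ε) :
    Summable (fun n : ℕ => ∑ k ∈ Finset.range (n + 1),
      if (n : ℝ) * (α + ε) < (k : ℝ) then (n.choose k : ℝ) * α ^ k * (1 - α) ^ (n - k)
      else 0) := by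
  obtain ⟨l, hl, hr⟩ := exists_pos_binomial_chernoff_rate_lt_one hα0 hα1 hε
  have hbase : 0 ≤ α * exp l + (1 - α) := by nlinarith [exp_pos l]
  refine Summable.of_nonneg_of_le (binomialUpperTail_nonneg hα0 hα1 · _) (fun n => ?_)
    (summable_geometric_of_lt_one (by positivity) hr)
  calc binomialUpperTail α n (n * (α + ε))
      ≤ exp (-(l * (n * (α + ε)))) * (α * exp l + (1 - α)) ^ n :=
        binomialUpperTail_le_exp_mul_mgf hα0 hα1 hl.le n _
    _ = ((α * exp l + (1 - α)) * exp (-(l * (α + ε)))) ^ n := by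
        rw [mul_pow, ← exp_nat_mul]; ring_nf
end

section
/- Let α ∈ [0,1] and let {Z_n : n ≥ 1} be {0,1}-valued random variables with partial sums S_n = Σ_{k=1}^n Z_k. Suppose P(Z_1 = 1) ≤ α and, for every n ≥ 2 and every s with P(S_{n−1} = s) > 0, P(Z_n = 1 ∣ S_{n−1} = s) ≤ α. Then for every n ≥ 1 and every l ∈ {0,…,n}, P(S_n ≥ l) ≤ P(B_n ≥ l), where B_n ∼ B(n, α) is binomially distributed with parameters n and α. -/
/-!
Write `T n l` for the tail `P(B_n ≥ l)`. Since `S_{n+1} - S_n ∈ {0, 1}`,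
`P(S_{n+1} ≥ m+1) ≤ P(S_n ≥ m+1) + α P(S_n = m) = (1-α) P(S_n ≥ m+1) + α P(S_n ≥ m)`,
while Pascal's rule gives the binomial tails the same recursion with equality,
`T (n+1) (m+1) = (1-α) T n (m+1) + α T n m`. As `0 ≤ α ≤ 1`, both coefficients are nonnegative,
so the bound propagates by induction on `n`, starting from `S_0 = 0`.
-/

open Finset MeasureTheory

noncomputable def binomialTerm (α : ℝ) (n k : ℕ) : ℝ := n.choose k * α ^ k * (1 - α) ^ (n - k)

noncomputable def binomialTail (α : ℝ) (n l : ℕ) : ℝ := ∑ k ∈ Icc l n, binomialTerm α n k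

lemma binomialTerm_of_lt {α : ℝ} {n k : ℕ} (h : n < k) : binomialTerm α n k = 0 := by
  simp [binomialTerm, Nat.choose_eq_zero_of_lt h]

lemma binomialTerm_succ_succ (α : ℝ) (n k : ℕ) :
    binomialTerm α (n + 1) (k + 1) = α * binomialTerm α n k + (1 - α) * binomialTerm α n (k + 1) := by
  rcases lt_trichotomy k n with h | rfl | h
  · obtain ⟨d, rfl⟩ := Nat.exists_eq_add_of_lt h
    simp only [binomialTerm, Nat.choose_succ_succ', Nat.cast_add,
      show k + d + 1 + 1 - (k + 1) = d + 1 by omega, show k + d + 1 - k = d + 1 by omega,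
      show k + d + 1 - (k + 1) = d by omega]
    ring
  · rw [binomialTerm_of_lt (Nat.lt_succ_self k)]
    simp only [binomialTerm, Nat.choose_self, Nat.sub_self, pow_succ]
    ring
  · simp [binomialTerm_of_lt h, binomialTerm_of_lt (Nat.succ_lt_succ h), binomialTerm_of_lt (h.trans (Nat.lt_succ_self k))]

lemma binomialTail_zero (α : ℝ) (n : ℕ) : binomialTail α n 0 = 1 := by
  calc binomialTail α n 0 = (α + (1 - α)) ^ n := by
        rw [add_pow, binomialTail, ← Nat.range_succ_eq_Icc_zero]
        exact sum_congr rfl fun k _ => by simp only [binomialTerm]; ring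
    _ = 1 := by simp

lemma binomialTail_succ_succ (α : ℝ) (n l : ℕ) :
    binomialTail α (n + 1) (l + 1) = (1 - α) * binomialTail α n (l + 1) + α * binomialTail α n l := by
  have shift : ∀ f : ℕ → ℝ, ∑ k ∈ Icc (l + 1) (n + 1), f k = ∑ j ∈ Icc l n, f (j + 1) := fun f => by
    rw [← map_add_right_Icc l n 1, sum_map]; rfl
  have top : binomialTail α n (l + 1) = ∑ k ∈ Icc (l + 1) (n + 1), binomialTerm α n k := by
    rcases le_or_gt l n with h | h
    · rw [sum_Icc_succ_top (by omega), binomialTerm_of_lt (Nat.lt_succ_self n), add_zero, binomialTail]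
    · rw [binomialTail, Icc_eq_empty_of_lt (by omega), Icc_eq_empty_of_lt (by omega)]
  rw [top]
  simp only [binomialTail, shift, binomialTerm_succ_succ, sum_add_distrib, ← mul_sum]
  ring

lemma binomialTail_of_lt {α : ℝ} {n l : ℕ} (h : n < l) : binomialTail α n l = 0 := by
  simp [binomialTail, Icc_eq_empty_of_lt h]

section CountingProcess

variable {Ω : Type*} [MeasurableSpace Ω] {μ : Measure Ω} [IsProbabilityMeasure μ]
  {α : ℝ} {S : ℕ → Ω → ℕ}

lemma measureReal_tail_succ_le (hα0 : 0 ≤ α) (hS : ∀ n, Measurable (S n))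
    (hstep : ∀ n ω, S (n + 1) ω = S n ω ∨ S (n + 1) ω = S n ω + 1)
    (hcond : ∀ n s, μ {ω | S (n + 1) ω = s + 1 ∧ S n ω = s} ≤ ENNReal.ofReal α * μ {ω | S n ω = s})
    (n m : ℕ) :
    μ.real {ω | m + 1 ≤ S (n + 1) ω}
      ≤ (1 - α) * μ.real {ω | m + 1 ≤ S n ω} + α * μ.real {ω | m ≤ S n ω} := by
  have hup : μ.real {ω | S (n + 1) ω = m + 1 ∧ S n ω = m} ≤ α * μ.real {ω | S n ω = m} := by
    simpa [measureReal_def, ENNReal.toReal_mul, hα0] using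
      ENNReal.toReal_mono (by finiteness) (hcond n m)
  have hcover : {ω | m + 1 ≤ S (n + 1) ω}
      ⊆ {ω | m + 1 ≤ S n ω} ∪ {ω | S (n + 1) ω = m + 1 ∧ S n ω = m} := by
    intro ω hω
    simp only [Set.mem_ofPred_eq, Set.mem_union] at hω ⊢
    rcases hstep n ω with h | h <;> omega
  have hsplit : μ.real {ω | m ≤ S n ω} = μ.real {ω | S n ω = m} + μ.real {ω | m + 1 ≤ S n ω} := by
    rw [← measureReal_union _ (measurableSet_le measurable_const (hS n))]
    · congr 1
      ext ω
      simp only [Set.mem_ofPred_eq, Set.mem_union]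
      omega
    · exact Set.disjoint_left.2 fun ω h1 h2 => by simp only [Set.mem_ofPred_eq] at h1 h2; omega
  calc μ.real {ω | m + 1 ≤ S (n + 1) ω}
      ≤ μ.real {ω | m + 1 ≤ S n ω} + μ.real {ω | S (n + 1) ω = m + 1 ∧ S n ω = m} :=
        (measureReal_mono hcover).trans (measureReal_union_le _ _)
    _ ≤ μ.real {ω | m + 1 ≤ S n ω} + α * μ.real {ω | S n ω = m} := by gcongr
    _ = (1 - α) * μ.real {ω | m + 1 ≤ S n ω} + α * μ.real {ω | m ≤ S n ω} := by
        rw [hsplit]; ring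

lemma measureReal_tail_le_binomialTail (hα0 : 0 ≤ α) (hα1 : α ≤ 1) (hS : ∀ n, Measurable (S n))
    (hS0 : ∀ ω, S 0 ω = 0) (hstep : ∀ n ω, S (n + 1) ω = S n ω ∨ S (n + 1) ω = S n ω + 1)
    (hcond : ∀ n s, μ {ω | S (n + 1) ω = s + 1 ∧ S n ω = s} ≤ ENNReal.ofReal α * μ {ω | S n ω = s})
    (n l : ℕ) : μ.real {ω | l ≤ S n ω} ≤ binomialTail α n l := by
  induction n generalizing l with
  | zero =>
    rcases l with _ | m
    · simp [binomialTail_zero]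
    · simp [hS0, binomialTail_of_lt]
  | succ n ih =>
    rcases l with _ | m
    · simp [binomialTail_zero]
    · calc μ.real {ω | m + 1 ≤ S (n + 1) ω}
          ≤ (1 - α) * μ.real {ω | m + 1 ≤ S n ω} + α * μ.real {ω | m ≤ S n ω} :=
            measureReal_tail_succ_le hα0 hS hstep hcond n m
        _ ≤ (1 - α) * binomialTail α n (m + 1) + α * binomialTail α n m :=
            add_le_add (mul_le_mul_of_nonneg_left (ih _) (sub_nonneg.2 hα1))
              (mul_le_mul_of_nonneg_left (ih _) hα0)
        _ = binomialTail α (n + 1) (m + 1) := (binomialTail_succ_succ α n m).symm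

end CountingProcess

/-- Stochastic domination of a conditionally-bounded sum of indicator variables by
a binomial distribution: if `P(Z_1 = 1) ≤ α` and `P(Z_n = 1 ∣ S_{n−1} = s) ≤ α`
whenever `P(S_{n−1} = s) > 0`, then `P(S_n ≥ l) ≤ P(B_n ≥ l)` for `B_n ∼ B(n, α)`. -/
theorem stmt11 (α : ℝ) (hα0 : 0 ≤ α) (hα1 : α ≤ 1)
    (Ω : Type) [MeasurableSpace Ω] (μ : Measure Ω) [IsProbabilityMeasure μ]
    (Z : ℕ → Ω → ℕ) (hZm : ∀ n, Measurable (Z n))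
    (hZ01 : ∀ n, 1 ≤ n → ∀ ω, Z n ω = 0 ∨ Z n ω = 1)
    (hZ1 : μ {ω | Z 1 ω = 1} ≤ ENNReal.ofReal α)
    -- `P(Z_n = 1 ∧ S_{n−1} = s) ≤ α ⬝ P(S_{n−1} = s)`, i.e. the conditional bound
    (hZcond : ∀ n, 2 ≤ n → ∀ s : ℕ,
      μ {ω | Z n ω = 1 ∧ ∑ k ∈ Finset.Icc 1 (n - 1), Z k ω = s}
        ≤ ENNReal.ofReal α * μ {ω | ∑ k ∈ Finset.Icc 1 (n - 1), Z k ω = s}) :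
    ∀ n, 1 ≤ n → ∀ l ≤ n,
      (μ {ω | l ≤ ∑ k ∈ Finset.Icc 1 n, Z k ω}).toReal
        ≤ ∑ k ∈ Finset.Icc l n, (n.choose k : ℝ) * α ^ k * (1 - α) ^ (n - k) := by
  set S : ℕ → Ω → ℕ := fun n ω => ∑ k ∈ Icc 1 n, Z k ω
  have hsucc : ∀ n ω, S (n + 1) ω = S n ω + Z (n + 1) ω := fun n ω =>
    sum_Icc_succ_top (Nat.le_add_left 1 n) _
  have hstep : ∀ n ω, S (n + 1) ω = S n ω ∨ S (n + 1) ω = S n ω + 1 := fun n ω => by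
    rcases hZ01 (n + 1) (Nat.le_add_left 1 n) ω with h | h <;> simp [hsucc, h]
  have hcond : ∀ n s, μ {ω | S (n + 1) ω = s + 1 ∧ S n ω = s}
      ≤ ENNReal.ofReal α * μ {ω | S n ω = s} := by
    intro n s
    have hset : {ω | S (n + 1) ω = s + 1 ∧ S n ω = s} = {ω | Z (n + 1) ω = 1 ∧ S n ω = s} := by
      ext ω
      simp only [Set.mem_ofPred_eq, hsucc]
      omega
    rcases n with _ | n
    · rcases s with _ | s
      · simpa [hset, S] using hZ1
      · simp [S]
    · simpa [hset] using hZcond (n + 2) (by omega) s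
  intro n _ l _
  exact measureReal_tail_le_binomialTail hα0 hα1 (fun n => Finset.measurable_sum _ fun k _ => hZm k)
    (fun ω => by simp) hstep hcond n l
end

section
/- Let α ∈ [0,1] and let {Z_n : n ≥ 1} be {0,1}-valued random variables with partial sums S_n = Σ_{k=1}^n Z_k. Suppose P(Z_1 = 1) ≤ α and, for every n ≥ 2 and every s with P(S_{n−1} = s) > 0, P(Z_n = 1 ∣ S_{n−1} = s) ≤ α. Then P(limsup_{n→∞} S_n/n > α) = 0. -/
/-!
Chernoff bound for the partial sums `S_n` of the `Z_n`, followed by Borel–Cantelli. For `L ≥ 1`,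
`L ^ S_{n+1} = L ^ S_n * (1 + (L - 1) 𝟙{Z_{n+1} = 1})`, and splitting `{Z_{n+1} = 1}` along the
values of `S_n` the conditional bound gives `E[L ^ S_{n+1}] ≤ (1 + (L - 1) α) E[L ^ S_n]`, hence
`E[L ^ S_n] ≤ (1 + (L - 1) α) ^ n`. By Markov, `P(S_n ≥ β n) ≤ ((1 + (L - 1) α) / L ^ β) ^ n`,
and for `β > α` some `L > 1` makes this ratio `< 1` (at `L = 1` both sides equal `1` and their
derivatives are `α < β`). The bounds are summable, so a.s. eventually `S_n < β n`; letting `β`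
decrease to `α` along the rationals gives `limsup S_n / n ≤ α` almost surely.
-/

open Finset Filter MeasureTheory Topology
open scoped ENNReal

lemma exists_one_lt_one_add_mul_lt_rpow {α β : ℝ} (hαβ : α < β) :
    ∃ l : ℝ, 1 < l ∧ 1 + (l - 1) * α < l ^ β := by
  set g : ℝ → ℝ := fun x => x ^ β - (1 + (x - 1) * α)
  have hg : HasDerivAt g (β - α) 1 := by
    have h : HasDerivAt g (β * 1 ^ (β - 1) - (1 * α)) 1 :=
      (Real.hasDerivAt_rpow_const (Or.inl one_ne_zero)).sub
        ((((hasDerivAt_id (1 : ℝ)).sub_const 1).mul_const α).const_add 1)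
    simpa only [Real.one_rpow, mul_one, one_mul] using h
  have hslope : Tendsto (slope g 1) (𝓝[>] 1) (𝓝 (β - α)) :=
    (hasDerivAt_iff_tendsto_slope.mp hg).mono_left (nhdsWithin_mono 1 fun x hx => ne_of_gt hx)
  obtain ⟨l, hpos, hl⟩ := ((hslope.eventually (eventually_gt_nhds (sub_pos.mpr hαβ))).and
    (eventually_mem_nhdsWithin : ∀ᶠ x in 𝓝[>] (1 : ℝ), 1 < x)).exists
  refine ⟨l, hl, ?_⟩
  have hl' : 0 < l - 1 := sub_pos.mpr hl
  have : 0 < g l := by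
    simpa [slope_def_field, g, div_pos_iff, hl', hl'.not_gt] using hpos
  simpa [g] using this

lemma ENNReal.exists_one_le_one_add_mul_lt_rpow {α β : ℝ} (hα : 0 ≤ α) (hαβ : α < β) :
    ∃ L : ℝ≥0∞, 1 ≤ L ∧ L ≠ ∞ ∧ 1 + (L - 1) * ENNReal.ofReal α < L ^ β := by
  obtain ⟨l, hl, hlβ⟩ := exists_one_lt_one_add_mul_lt_rpow hαβ
  refine ⟨ENNReal.ofReal l, ENNReal.one_le_ofReal.mpr hl.le, ENNReal.ofReal_ne_top, ?_⟩
  rw [ENNReal.ofReal_rpow_of_pos (by linarith), ← ENNReal.ofReal_one,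
    ← ENNReal.ofReal_sub _ zero_le_one, ← ENNReal.ofReal_mul (by linarith),
    ← ENNReal.ofReal_add zero_le_one (by nlinarith)]
  exact (ENNReal.ofReal_lt_ofReal_iff (Real.rpow_pos_of_pos (by linarith) β)).mpr hlβ

lemma setLIntegral_comp_le_mul_lintegral_comp {Ω α : Type*} [MeasurableSpace Ω] {μ : Measure Ω}
    [MeasurableSpace α] [Countable α] [MeasurableSingletonClass α] {f : Ω → α} (hf : Measurable f)
    {A : Set Ω} {c : ℝ≥0∞} (h : ∀ s, μ (A ∩ f ⁻¹' {s}) ≤ c * μ (f ⁻¹' {s})) (g : α → ℝ≥0∞) :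
    ∫⁻ ω in A, g (f ω) ∂μ ≤ c * ∫⁻ ω, g (f ω) ∂μ := by
  have hg := measurable_of_countable g
  rw [← lintegral_map hg hf, ← lintegral_map hg hf, lintegral_countable', lintegral_countable',
    ← ENNReal.tsum_mul_left]
  refine ENNReal.tsum_le_tsum fun s => ?_
  have hs := measurableSet_singleton s
  rw [Measure.map_apply hf hs, Measure.map_apply hf hs, Measure.restrict_apply (hf hs),
    Set.inter_comm, mul_left_comm]
  gcongr
  exact h s

section PartialSum

variable {Ω : Type*} {Z : ℕ → Ω → ℕ}

def partialSum (Z : ℕ → Ω → ℕ) (n : ℕ) (ω : Ω) : ℕ := ∑ k ∈ Icc 1 n, Z k ω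

@[simp]
lemma partialSum_zero (ω : Ω) : partialSum Z 0 ω = 0 := rfl

lemma partialSum_succ (n : ℕ) (ω : Ω) : partialSum Z (n + 1) ω = partialSum Z n ω + Z (n + 1) ω :=
  sum_Icc_succ_top (Nat.le_add_left 1 n) _

variable [MeasurableSpace Ω] {μ : Measure Ω}

lemma measurable_partialSum (hZ : ∀ n, Measurable (Z n)) (n : ℕ) : Measurable (partialSum Z n) :=
  Finset.measurable_sum _ fun k _ => hZ k

lemma measure_succ_eq_one_and_partialSum_eq_le [IsProbabilityMeasure μ] {a : ℝ≥0∞}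
    (h₁ : μ {ω | Z 1 ω = 1} ≤ a)
    (h : ∀ n, 2 ≤ n → ∀ s : ℕ, μ {ω | Z n ω = 1 ∧ partialSum Z (n - 1) ω = s}
      ≤ a * μ {ω | partialSum Z (n - 1) ω = s}) (n s : ℕ) :
    μ {ω | Z (n + 1) ω = 1 ∧ partialSum Z n ω = s} ≤ a * μ {ω | partialSum Z n ω = s} := by
  rcases n with _ | n
  · rcases eq_or_ne s 0 with rfl | hs
    · simpa [eq_comm] using h₁
    · simp [hs.symm]
  · simpa using h (n + 2) (by omega) s

lemma lintegral_pow_partialSum_le [IsProbabilityMeasure μ] (hZm : ∀ n, Measurable (Z n))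
    (hZ01 : ∀ n, 1 ≤ n → ∀ ω, Z n ω = 0 ∨ Z n ω = 1) {a L : ℝ≥0∞} (hL : 1 ≤ L)
    (h : ∀ n s, μ {ω | Z (n + 1) ω = 1 ∧ partialSum Z n ω = s} ≤ a * μ {ω | partialSum Z n ω = s})
    (n : ℕ) : ∫⁻ ω, L ^ partialSum Z n ω ∂μ ≤ (1 + (L - 1) * a) ^ n := by
  induction n with
  | zero => simp
  | succ n ih =>
    set E := {ω | Z (n + 1) ω = 1}
    have hE : MeasurableSet E := hZm (n + 1) (measurableSet_singleton 1)
    have hS := measurable_partialSum hZm n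
    have hsplit : ∀ ω, L ^ partialSum Z (n + 1) ω
        = L ^ partialSum Z n ω + (L - 1) * E.indicator (fun ω => L ^ partialSum Z n ω) ω := by
      intro ω
      rcases hZ01 (n + 1) n.succ_pos ω with h0 | h1
      · simp [partialSum_succ, E, h0]
      · simp only [partialSum_succ, h1, pow_succ, Set.mem_ofPred_eq, Set.indicator_of_mem, E]
        rw [← one_add_mul, add_tsub_cancel_of_le hL, mul_comm]
    calc ∫⁻ ω, L ^ partialSum Z (n + 1) ω ∂μ
        = ∫⁻ ω, L ^ partialSum Z n ω ∂μ + (L - 1) * ∫⁻ ω in E, L ^ partialSum Z n ω ∂μ := by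
          simp_rw [hsplit]
          rw [lintegral_add_left (by fun_prop), lintegral_const_mul _ (by fun_prop),
            lintegral_indicator hE]
      _ ≤ ∫⁻ ω, L ^ partialSum Z n ω ∂μ + (L - 1) * (a * ∫⁻ ω, L ^ partialSum Z n ω ∂μ) := by
          gcongr
          exact setLIntegral_comp_le_mul_lintegral_comp hS (h n) (L ^ ·)
      _ = (1 + (L - 1) * a) * ∫⁻ ω, L ^ partialSum Z n ω ∂μ := by ring
      _ ≤ (1 + (L - 1) * a) ^ (n + 1) := by
          rw [pow_succ']
          gcongr


lemma measure_mul_le_partialSum_mul_rpow_pow_le [IsProbabilityMeasure μ]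
    (hZm : ∀ n, Measurable (Z n)) (hZ01 : ∀ n, 1 ≤ n → ∀ ω, Z n ω = 0 ∨ Z n ω = 1)
    {a L : ℝ≥0∞} (hL : 1 ≤ L)
    (h : ∀ n s, μ {ω | Z (n + 1) ω = 1 ∧ partialSum Z n ω = s} ≤ a * μ {ω | partialSum Z n ω = s})
    (β : ℝ) (n : ℕ) :
    μ {ω | β * n ≤ partialSum Z n ω} * (L ^ β) ^ n ≤ (1 + (L - 1) * a) ^ n := by
  calc μ {ω | β * n ≤ partialSum Z n ω} * (L ^ β) ^ n
      ≤ (L ^ β) ^ n * μ {ω | (L ^ β) ^ n ≤ L ^ partialSum Z n ω} := by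
        rw [mul_comm]
        refine mul_le_mul_right (measure_mono fun ω (hω : β * n ≤ partialSum Z n ω) => ?_) _
        change (L ^ β) ^ n ≤ L ^ partialSum Z n ω
        rw [← ENNReal.rpow_natCast, ← ENNReal.rpow_mul, ← ENNReal.rpow_natCast]
        exact ENNReal.rpow_le_rpow_of_exponent_le hL hω
    _ ≤ ∫⁻ ω, L ^ partialSum Z n ω ∂μ := mul_meas_ge_le_lintegral₀
        (measurable_const.pow (measurable_partialSum hZm n)).aemeasurable _
    _ ≤ (1 + (L - 1) * a) ^ n := lintegral_pow_partialSum_le hZm hZ01 hL h n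

lemma ae_eventually_partialSum_lt_mul [IsProbabilityMeasure μ]
    (hZm : ∀ n, Measurable (Z n)) (hZ01 : ∀ n, 1 ≤ n → ∀ ω, Z n ω = 0 ∨ Z n ω = 1)
    {α β : ℝ} (hα : 0 ≤ α) (hαβ : α < β)
    (h : ∀ n s, μ {ω | Z (n + 1) ω = 1 ∧ partialSum Z n ω = s}
      ≤ ENNReal.ofReal α * μ {ω | partialSum Z n ω = s}) :
    ∀ᵐ ω ∂μ, ∀ᶠ n in atTop, (partialSum Z n ω : ℝ) < β * n := by
  obtain ⟨L, hL, hLtop, hc⟩ := ENNReal.exists_one_le_one_add_mul_lt_rpow hα hαβ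
  have hL0 : L ≠ 0 := (zero_lt_one.trans_le hL).ne'
  have hLβ0 : L ^ β ≠ 0 := (ENNReal.rpow_pos (pos_iff_ne_zero.2 hL0) hLtop).ne'
  have hLβtop : L ^ β ≠ ∞ := ENNReal.rpow_ne_top_of_ne_zero hL0 hLtop
  set c := 1 + (L - 1) * ENNReal.ofReal α
  have hr : c / L ^ β < 1 := (ENNReal.div_lt_iff (Or.inl hLβ0) (Or.inl hLβtop)).2 (by rwa [one_mul])
  have hbound : ∀ n : ℕ, μ {ω | β * n ≤ partialSum Z n ω} ≤ (c / L ^ β) ^ n := fun n => by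
    rw [div_eq_mul_inv, mul_pow, ← ENNReal.inv_pow, ← div_eq_mul_inv,
      ENNReal.le_div_iff_mul_le (Or.inl (pow_ne_zero _ hLβ0)) (Or.inl (ENNReal.pow_ne_top hLβtop))]
    exact measure_mul_le_partialSum_mul_rpow_pow_le hZm hZ01 hL h β n
  have hsum : ∑' n : ℕ, μ {ω | β * n ≤ partialSum Z n ω} ≠ ∞ :=
    ne_top_of_le_ne_top (tsum_geometric_lt_top.2 hr).ne (ENNReal.tsum_le_tsum hbound)
  filter_upwards [ae_eventually_notMem hsum] with ω hω
  filter_upwards [hω] with n hn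
  simpa using hn

end PartialSum

lemma ae_limsup_le_of_forall_lt {Ω ι : Type*} [MeasurableSpace Ω] {μ : Measure Ω} {l : Filter ι}
    {f : ι → Ω → ℝ} {α : ℝ} (hf : ∀ ω, IsCoboundedUnder (· ≤ ·) l (f · ω))
    (h : ∀ β, α < β → ∀ᵐ ω ∂μ, ∀ᶠ i in l, f i ω ≤ β) :
    ∀ᵐ ω ∂μ, limsup (f · ω) l ≤ α := by
  have hq : ∀ᵐ ω ∂μ, ∀ q : {q : ℚ // α < q}, ∀ᶠ i in l, f i ω ≤ q := ae_all_iff.2 fun q => h q q.2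
  filter_upwards [hq] with ω hω
  exact le_of_forall_lt_rat_imp_le fun q hq => limsup_le_of_le (hf ω) (hω ⟨q, hq⟩)

theorem stmt12_general (α : ℝ) (hα0 : 0 ≤ α)
    (Ω : Type) [MeasurableSpace Ω] (μ : Measure Ω) [IsProbabilityMeasure μ]
    (Z : ℕ → Ω → ℕ) (hZm : ∀ n, Measurable (Z n))
    (hZ01 : ∀ n, 1 ≤ n → ∀ ω, Z n ω = 0 ∨ Z n ω = 1)
    (hZ1 : μ {ω | Z 1 ω = 1} ≤ ENNReal.ofReal α)
    -- `P(Z_n = 1 ∧ S_{n−1} = s) ≤ α ⬝ P(S_{n−1} = s)`, i.e. the conditional bound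
    (hZcond : ∀ n, 2 ≤ n → ∀ s : ℕ,
      μ {ω | Z n ω = 1 ∧ ∑ k ∈ Finset.Icc 1 (n - 1), Z k ω = s}
        ≤ ENNReal.ofReal α * μ {ω | ∑ k ∈ Finset.Icc 1 (n - 1), Z k ω = s}) :
    μ {ω | α < limsup (fun n : ℕ =>
        ((∑ k ∈ Finset.Icc 1 n, Z k ω : ℕ) : ℝ) / (n : ℝ)) atTop} = 0 := by
  have hcond := measure_succ_eq_one_and_partialSum_eq_le hZ1 hZcond
  have hmean : ∀ β, α < β →
      ∀ᵐ ω ∂μ, ∀ᶠ n : ℕ in atTop, (partialSum Z n ω : ℝ) / n ≤ β := fun β hβ => by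
    filter_upwards [ae_eventually_partialSum_lt_mul hZm hZ01 hα0 hβ hcond] with ω hω
    filter_upwards [hω, eventually_gt_atTop 0] with n hn hn0
    rw [div_le_iff₀ (by positivity)]
    exact hn.le
  have hlimsup := ae_limsup_le_of_forall_lt
    (fun ω => isCoboundedUnder_le_of_le atTop fun n => by positivity) hmean
  simp only [ae_iff, not_le] at hlimsup
  exact hlimsup

/-- One-sided strong law for conditionally-bounded indicator variables: if
`P(Z_1 = 1) ≤ α` and `P(Z_n = 1 ∣ S_{n−1} = s) ≤ α` whenever `P(S_{n−1} = s) > 0`,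
then `P(limsup_{n→∞} S_n/n > α) = 0`. -/
theorem stmt12 (α : ℝ) (hα0 : 0 ≤ α) (hα1 : α ≤ 1)
    (Ω : Type) [MeasurableSpace Ω] (μ : Measure Ω) [IsProbabilityMeasure μ]
    (Z : ℕ → Ω → ℕ) (hZm : ∀ n, Measurable (Z n))
    (hZ01 : ∀ n, 1 ≤ n → ∀ ω, Z n ω = 0 ∨ Z n ω = 1)
    (hZ1 : μ {ω | Z 1 ω = 1} ≤ ENNReal.ofReal α)
    -- `P(Z_n = 1 ∧ S_{n−1} = s) ≤ α ⬝ P(S_{n−1} = s)`, i.e. the conditional bound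
    (hZcond : ∀ n, 2 ≤ n → ∀ s : ℕ,
      μ {ω | Z n ω = 1 ∧ ∑ k ∈ Finset.Icc 1 (n - 1), Z k ω = s}
        ≤ ENNReal.ofReal α * μ {ω | ∑ k ∈ Finset.Icc 1 (n - 1), Z k ω = s}) :
    μ {ω | α < limsup (fun n : ℕ =>
        ((∑ k ∈ Finset.Icc 1 n, Z k ω : ℕ) : ℝ) / (n : ℝ)) atTop} = 0 :=
  stmt12_general α hα0 Ω μ Z hZm hZ01 hZ1 hZcond
end

section
/- Let U ⊂ ℝ^k be compact and let φ be a set-valued map assigning to each u ∈ U a closed subset φ(u) of a fixed compact set C ⊂ ℝ^d, which is upper hemi-continuous in the sense that whenever u_n → u in U, p_n ∈ φ(u_n), and p_n → p, then p ∈ φ(u). Suppose that for all u', u'' ∈ U, φ(u') ∩ φ(u'') ⊆ φ((1/2)u' + (1/2)u''). Then for every u ∈ U and ε > 0, there exists δ > 0 such that for all u', u'' ∈ U with u = (1/2)u' + (1/2)u'': B_δ(φ(u')) ∩ B_δ(φ(u'')) ⊆ B_ε(φ(u)), where B_δ(A) = {p ∈ ℝ^d : inf_{q∈A} |p−q| <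 δ} (and B_δ(∅) = ∅). -/
/-!
The L¹ and sup metrics on `ℝ^d` are equivalent, so it suffices to argue with thickenings in the
sup metric, and for any continuous "midpoint" map `m` in place of `½u' + ½u''`. Argue by
contradiction: with `δ = 1/(n+1)` one obtains `u'ₙ, u''ₙ ∈ U` with `u = m(u'ₙ, u''ₙ)` and points
`pₙ` within `δ` of some `q'ₙ ∈ φ(u'ₙ)` and `q''ₙ ∈ φ(u''ₙ)` but not within `ε` of `φ(u)`.
Compactness of `U × U × C` gives a subsequence along which `u'ₙ → a`, `u''ₙ → b` and `q'ₙ → q`;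
then also `pₙ → q` and `q''ₙ → q`, so upper hemi-continuity puts `q` in `φ(a) ∩ φ(b)`, hence in
`φ(m(a, b)) = φ(u)`, and `pₙ` ends up within `ε` of `φ(u)`.
-/

open Finset Set Filter

open Topology Metric

section L1Dist

variable {m : ℕ}

lemma dist_le_l1dist (x y : Fin m → ℝ) : dist x y ≤ l1dist x y := by
  refine (dist_pi_le_iff (Finset.sum_nonneg fun _ _ => abs_nonneg _)).2 fun i => ?_
  rw [Real.dist_eq]
  exact Finset.single_le_sum (fun j _ => abs_nonneg (x j - y j)) (Finset.mem_univ i)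

lemma l1dist_le_card_mul_dist (x y : Fin m → ℝ) : l1dist x y ≤ m * dist x y := by
  calc l1dist x y ≤ ∑ _i : Fin m, dist x y :=
        Finset.sum_le_sum fun i _ => by simpa [Real.dist_eq] using dist_le_pi_dist x y i
    _ = m * dist x y := by simp

lemma mem_thickening_of_l1dist_lt {δ : ℝ} {A : Set (Fin m → ℝ)} {p q : Fin m → ℝ}
    (hq : q ∈ A) (hpq : l1dist p q < δ) : p ∈ thickening δ A :=
  mem_thickening_iff.2 ⟨q, hq, (dist_le_l1dist p q).trans_lt hpq⟩

lemma exists_l1dist_lt_of_mem_thickening {ε : ℝ} {A : Set (Fin m → ℝ)} {p : Fin m → ℝ}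
    (hp : p ∈ thickening (ε / (m + 1)) A) : ∃ q ∈ A, l1dist p q < ε := by
  obtain ⟨q, hq, hpq⟩ := mem_thickening_iff.1 hp
  refine ⟨q, hq, ?_⟩
  calc l1dist p q ≤ m * dist p q := l1dist_le_card_mul_dist p q
    _ ≤ (m + 1) * dist p q := by gcongr; linarith
    _ < ε := by rwa [lt_div_iff₀' (by positivity)] at hpq

end L1Dist

def SeqUpperHemicontinuousOn {X Y : Type*} [TopologicalSpace X] [TopologicalSpace Y]
    (φ : X → Set Y) (U : Set X) : Prop :=
  ∀ (un : ℕ → X) (u : X), (∀ n, un n ∈ U) → u ∈ U → Tendsto un atTop (𝓝 u) →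
    ∀ (pn : ℕ → Y) (p : Y), (∀ n, pn n ∈ φ (un n)) → Tendsto pn atTop (𝓝 p) → p ∈ φ u

lemma tendsto_dist_zero_of_dist_lt_inv_succ {Y : Type*} [PseudoMetricSpace Y] {x y : ℕ → Y}
    (h : ∀ n, dist (x n) (y n) < 1 / ((n : ℝ) + 1)) :
    Tendsto (fun n => dist (x n) (y n)) atTop (𝓝 0) :=
  squeeze_zero (fun _ => dist_nonneg) (fun n => (h n).le) tendsto_one_div_add_atTop_nhds_zero_nat

theorem exists_pos_thickening_inter_thickening_subset_thickening
    {X Y : Type*} [TopologicalSpace X] [FirstCountableTopology X] [T1Space X]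
    [PseudoMetricSpace Y] {U : Set X} (hU : IsCompact U) {C : Set Y} (hC : IsCompact C)
    {φ : X → Set Y} (hφC : ∀ u ∈ U, φ u ⊆ C) (hφ : SeqUpperHemicontinuousOn φ U)
    {mid : X → X → X} (hmid : Continuous fun v : X × X => mid v.1 v.2)
    (hcons : ∀ u' ∈ U, ∀ u'' ∈ U, φ u' ∩ φ u'' ⊆ φ (mid u' u''))
    (u : X) {ε : ℝ} (hε : 0 < ε) :
    ∃ δ > 0, ∀ u' ∈ U, ∀ u'' ∈ U, u = mid u' u'' →
      thickening δ (φ u') ∩ thickening δ (φ u'') ⊆ thickening ε (φ u) := by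
  by_contra! h
  choose a ha b hb hab hsub using fun n : ℕ => h (1 / ((n : ℝ) + 1)) Nat.one_div_pos_of_nat
  choose p hp hpfar using fun n => not_subset.1 (hsub n)
  choose q₁ hq₁ hpq₁ using fun n => mem_thickening_iff.1 (hp n).1
  choose q₂ hq₂ hpq₂ using fun n => mem_thickening_iff.1 (hp n).2
  obtain ⟨⟨a', b', q⟩, ⟨ha', hb', -⟩, σ, hσ, hlim⟩ :=
    (hU.prod (hU.prod hC)).tendsto_subseq (x := fun n => (a n, b n, q₁ n))
      fun n => ⟨ha n, hb n, hφC _ (ha n) (hq₁ n)⟩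
  have hσ_top := hσ.tendsto_atTop
  have haσ : Tendsto (fun n => a (σ n)) atTop (𝓝 a') := (continuous_fst.tendsto _).comp hlim
  have hbσ : Tendsto (fun n => b (σ n)) atTop (𝓝 b') :=
    (continuous_fst.comp continuous_snd |>.tendsto _).comp hlim
  have hq₁σ : Tendsto (fun n => q₁ (σ n)) atTop (𝓝 q) :=
    (continuous_snd.comp continuous_snd |>.tendsto _).comp hlim
  have hpσ : Tendsto (fun n => p (σ n)) atTop (𝓝 q) :=
    hq₁σ.congr_dist <| by
      simpa only [dist_comm, Function.comp_def] using
        (tendsto_dist_zero_of_dist_lt_inv_succ hpq₁).comp hσ_top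
  have hq₂σ : Tendsto (fun n => q₂ (σ n)) atTop (𝓝 q) :=
    hpσ.congr_dist <| (tendsto_dist_zero_of_dist_lt_inv_succ hpq₂).comp hσ_top
  have hu : u = mid a' b' := by
    refine tendsto_const_nhds_iff (l := atTop (α := ℕ)) |>.1 ?_
    simpa only [Function.comp_def, ← hab] using
      (hmid.tendsto (a', b')).comp (haσ.prodMk_nhds hbσ)
  have hqu : q ∈ φ u := hu ▸ hcons a' ha' b' hb'
    ⟨hφ _ a' (fun _ => ha _) ha' haσ _ q (fun _ => hq₁ _) hq₁σ,
      hφ _ b' (fun _ => hb _) hb' hbσ _ q (fun _ => hq₂ _) hq₂σ⟩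
  obtain ⟨n, hn⟩ :=
    (hpσ.eventually (isOpen_thickening.mem_nhds (self_subset_thickening hε _ hqu))).exists
  exact hpfar _ hn

theorem stmt17_general (k d : ℕ)
    (U : Set (Fin k → ℝ)) (hUcpt : IsCompact U)
    (C : Set (Fin d → ℝ)) (hCcpt : IsCompact C)
    (φ : (Fin k → ℝ) → Set (Fin d → ℝ))
    (hφsub : ∀ u ∈ U, φ u ⊆ C)
    -- sequential upper hemi-continuity
    (hφuhc : ∀ (un : ℕ → Fin k → ℝ) (u : Fin k → ℝ), (∀ n, un n ∈ U) → u ∈ U →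
      Tendsto un atTop (nhds u) →
      ∀ (pn : ℕ → Fin d → ℝ) (p : Fin d → ℝ), (∀ n, pn n ∈ φ (un n)) →
        Tendsto pn atTop (nhds p) → p ∈ φ u)
    -- midpoint consistency
    (hcons : ∀ u' ∈ U, ∀ u'' ∈ U,
      φ u' ∩ φ u'' ⊆ φ ((2 : ℝ)⁻¹ • u' + (2 : ℝ)⁻¹ • u'')) :
    ∀ u ∈ U, ∀ ε > 0, ∃ δ > 0, ∀ u' ∈ U, ∀ u'' ∈ U,
      u = (2 : ℝ)⁻¹ • u' + (2 : ℝ)⁻¹ • u'' →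
      ∀ p : Fin d → ℝ,
        (∃ q ∈ φ u', l1dist p q < δ) → (∃ q ∈ φ u'', l1dist p q < δ) →
        ∃ q ∈ φ u, l1dist p q < ε := by
  intro u _ ε hε
  obtain ⟨δ, hδ, hsub⟩ := exists_pos_thickening_inter_thickening_subset_thickening hUcpt hCcpt
    hφsub hφuhc (mid := fun u' u'' => (2 : ℝ)⁻¹ • u' + (2 : ℝ)⁻¹ • u'') (by fun_prop) hcons u
    (ε := ε / (d + 1)) (by positivity)
  refine ⟨δ, hδ, fun u' hu' u'' hu'' hu p ⟨q', hq', hpq'⟩ ⟨q'', hq'', hpq''⟩ => ?_⟩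
  exact exists_l1dist_lt_of_mem_thickening <| hsub u' hu' u'' hu'' hu
    ⟨mem_thickening_of_l1dist_lt hq' hpq', mem_thickening_of_l1dist_lt hq'' hpq''⟩

/-- Abstract lemma behind approximate population-consistency: for an upper
hemi-continuous, midpoint-consistent correspondence `φ` on a compact set `U` with closed
values in a compact set `C`, for every `u ∈ U` and `ε > 0` there is `δ > 0` with
`B_δ(φ(u')) ∩ B_δ(φ(u'')) ⊆ B_ε(φ(u))` whenever `u = ½u' + ½u''`. -/
theorem stmt17 (k d : ℕ)
    (U : Set (Fin k → ℝ)) (hUcpt : IsCompact U)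
    (C : Set (Fin d → ℝ)) (hCcpt : IsCompact C)
    (φ : (Fin k → ℝ) → Set (Fin d → ℝ))
    (hφsub : ∀ u ∈ U, φ u ⊆ C) (hφcl : ∀ u ∈ U, IsClosed (φ u))
    -- sequential upper hemi-continuity
    (hφuhc : ∀ (un : ℕ → Fin k → ℝ) (u : Fin k → ℝ), (∀ n, un n ∈ U) → u ∈ U →
      Tendsto un atTop (nhds u) →
      ∀ (pn : ℕ → Fin d → ℝ) (p : Fin d → ℝ), (∀ n, pn n ∈ φ (un n)) →
        Tendsto pn atTop (nhds p) → p ∈ φ u)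
    -- midpoint consistency
    (hcons : ∀ u' ∈ U, ∀ u'' ∈ U,
      φ u' ∩ φ u'' ⊆ φ ((2 : ℝ)⁻¹ • u' + (2 : ℝ)⁻¹ • u'')) :
    ∀ u ∈ U, ∀ ε > 0, ∃ δ > 0, ∀ u' ∈ U, ∀ u'' ∈ U,
      u = (2 : ℝ)⁻¹ • u' + (2 : ℝ)⁻¹ • u'' →
      ∀ p : Fin d → ℝ,
        (∃ q ∈ φ u', l1dist p q < δ) → (∃ q ∈ φ u'', l1dist p q < δ) →
        ∃ q ∈ φ u, l1dist p q < ε :=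
  stmt17_general k d U hUcpt C hCcpt φ hφsub hφuhc hcons
end
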